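/- arXiv:1603.08395 — 6 statements merged into one kernel-verified Lean document; each statement's English description precedes it below -/
import Mathlib

section
/- For the equioriented type A_n quiver with indecomposable representations U_{i,j}, the dimension of Ext^1(U_{k,l}, U_{i,j}) equals 1 if k+1 ≤ i ≤ l+1 ≤ j, and 0 otherwise. -/
/-- A representation of the equioriented quiver of type `A` (vertices indexed by `ℕ`;
representations of `A_n` are those supported on vertices `1,…,n`). -/
structure ARep where
  V : ℕ → Type
  [addgrp : ∀ i, AddCommGroup (V i)]
  [mod : ∀ i, Module ℂ (V i)]
  f : ∀ i : ℕ, V i →ₗ[ℂ] V (i + 1)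

attribute [instance] ARep.addgrp ARep.mod

/-- The space of morphisms of quiver representations `M → N`. -/
noncomputable def homSet (M N : ARep) : Submodule ℂ (∀ i, M.V i →ₗ[ℂ] N.V i) where
  carrier := {φ | ∀ i, N.f i ∘ₗ φ i = φ (i + 1) ∘ₗ M.f i}
  add_mem' := by
    intro a b ha hb i
    simp only [Pi.add_apply, LinearMap.comp_add, LinearMap.add_comp, ha i, hb i]
  zero_mem' := by intro i; simp
  smul_mem' := by
    intro c a ha i
    simp only [Pi.smul_apply, LinearMap.comp_smul, LinearMap.smul_comp, ha i]

/-- `dim Hom(M, N)`. -/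
noncomputable def homDim (M N : ARep) : ℕ := Module.finrank ℂ (homSet M N)

/-- The differential whose cokernel computes `Ext¹(M, N)` for representations of the
equioriented type `A` quiver. -/
noncomputable def delta (M N : ARep) :
    (∀ i, M.V i →ₗ[ℂ] N.V i) →ₗ[ℂ] (∀ i, M.V i →ₗ[ℂ] N.V (i + 1)) where
  toFun φ := fun i => N.f i ∘ₗ φ i - φ (i + 1) ∘ₗ M.f i
  map_add' a b := by
    funext i
    simp only [Pi.add_apply, LinearMap.comp_add, LinearMap.add_comp]
    abel
  map_smul' c a := by
    funext i
    simp only [Pi.smul_apply, LinearMap.comp_smul, LinearMap.smul_comp, RingHom.id_apply,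
      smul_sub]

/-- `dim Ext¹(M, N)`, computed via the standard projective resolution of `M`. -/
noncomputable def ext1Dim (M N : ARep) : ℕ :=
  Module.finrank ℂ ((∀ i, M.V i →ₗ[ℂ] N.V (i + 1)) ⧸ LinearMap.range (delta M N))

/-- The vector space at vertex `k` of the indecomposable `U_{i,j}`. -/
noncomputable def UV (i j k : ℕ) : Submodule ℂ ℂ := if i ≤ k ∧ k ≤ j then ⊤ else ⊥

open Classical in
/-- The indecomposable representation `U_{i,j}`: a copy of `ℂ` at each vertex
`i ≤ k ≤ j`, with identity maps between adjacent copies, and `0` elsewhere. -/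
noncomputable def Urep (i j : ℕ) : ARep where
  V := fun k => ↥(UV i j k)
  f := fun k => if h : UV i j k ≤ UV i j (k + 1) then Submodule.inclusion h else 0

/-- Direct sum of two representations. -/
noncomputable def dsum (M N : ARep) : ARep where
  V := fun i => M.V i × N.V i
  f := fun i => (M.f i).prodMap (N.f i)

/-- Direct sum of a finite family of representations. -/
noncomputable def dsumFam {k : ℕ} (F : Fin k → ARep) : ARep where
  V := fun i => ∀ j, (F j).V i
  f := fun i => LinearMap.pi fun j => ((F j).f i).comp (LinearMap.proj j)

/-- Direct sum of the indecomposables `U_{p.1, p.2}` for `p` running over a list. -/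
noncomputable def dsumList : List (ℕ × ℕ) → ARep
  | [] => Urep 1 0
  | p :: L => dsum (Urep p.1 p.2) (dsumList L)

/-- The path algebra `A = ⊕ᵢ Pᵢ = ⊕ᵢ U_{i,n}` as a representation. -/
noncomputable def pathAlg (n : ℕ) : ARep :=
  dsumFam fun j : Fin n => Urep ((j : ℕ) + 1) n

/-- `S = ⊕ᵢ Sᵢ = ⊕ᵢ U_{i,i}`, the direct sum of all simples. -/
noncomputable def socSum (n : ℕ) : ARep :=
  dsumFam fun j : Fin n => Urep ((j : ℕ) + 1) ((j : ℕ) + 1)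

/-- `A* = ⊕ᵢ Iᵢ = ⊕ᵢ U_{1,i}`. -/
noncomputable def injSum (n : ℕ) : ARep :=
  dsumFam fun j : Fin n => Urep 1 ((j : ℕ) + 1)

/-- `A*/S = ⊕ᵢ U_{1,i-1}`. -/
noncomputable def injModSoc (n : ℕ) : ARep :=
  dsumFam fun j : Fin n => Urep 1 (j : ℕ)

/-- `M` is supported on the vertices `1,…,n`. -/
def SupportedOn (n : ℕ) (M : ARep) : Prop :=
  ∀ i, (i = 0 ∨ n < i) → Subsingleton (M.V i)

/-- An embedding (injective morphism) of representations `N ↪ M`. -/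
def RepEmb (N M : ARep) : Prop :=
  ∃ φ ∈ homSet N M, ∀ i, Function.Injective (φ i)

/-- An isomorphism of representations. -/
def RepIso (M N : ARep) : Prop :=
  ∃ φ ∈ homSet M N, ∀ i, Function.Bijective (φ i)

/-- A representation of the equioriented `A_n` quiver is projective iff all its
structure maps `f_i` (`1 ≤ i < n`) are injective. -/
def IsProjRep (n : ℕ) (P : ARep) : Prop :=
  SupportedOn n P ∧ ∀ i, 1 ≤ i → i < n → Function.Injective (P.f i)

/-- `X` has no nonzero projective direct summand. -/
def NoProjSummand (n : ℕ) (X : ARep) : Prop :=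
  ∀ P' X' : ARep, IsProjRep n P' → RepIso X (dsum P' X') → ∀ i, Subsingleton (P'.V i)

/-!
A family of maps `U_{k,l}(a) → U_{i,j}(b)` is determined by the images of the generators, so
`1`-cochains are scalar functions `c` on `S¹ = {a | a ∈ [k,l], a + 1 ∈ [i,j]}`, `0`-cochains are
scalar functions `u` on `S⁰ = [k,l] ∩ [i,j]`, and `delta` becomes the discrete difference
`u ↦ (a ↦ u a - u (a + 1))`. Tail sums of `c` solve `u a - u (a + 1) = c a` on `S¹` when `i ≤ k`,
prefix sums do when `j ≤ l`, and when `l + 2 ≤ i` there is nothing to solve. In the remaining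
case `k < i ≤ l + 1 ≤ j` we have `S¹ = [i - 1, l]` and `S⁰ = [i, l]`: the differences are exactly
the `c` of total sum zero, so the cokernel is `ℂ`.
-/

open Finset

namespace UV

noncomputable def gen (i j a : ℕ) : UV i j a :=
  ⟨if i ≤ a ∧ a ≤ j then 1 else 0, by unfold UV; split_ifs <;> simp⟩

lemma coe_gen (i j a : ℕ) : (gen i j a : ℂ) = if i ≤ a ∧ a ≤ j then 1 else 0 := rfl

lemma coe_eq_zero {i j a : ℕ} (h : ¬(i ≤ a ∧ a ≤ j)) (x : UV i j a) : (x : ℂ) = 0 := by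
  simpa [UV, h] using x.2

lemma gen_eq_zero {i j a : ℕ} (h : ¬(i ≤ a ∧ a ≤ j)) : gen i j a = 0 :=
  Subtype.ext (coe_eq_zero h _)

lemma coe_map_apply {k l i j a b : ℕ} (f : UV k l a →ₗ[ℂ] UV i j b) (x : UV k l a) :
    (f x : ℂ) = x * f (gen k l a) := by
  by_cases h : k ≤ a ∧ a ≤ l
  · have hx : x = (x : ℂ) • gen k l a := Subtype.ext (by simp [coe_gen, h])
    rw [hx, map_smul]
    simp [coe_gen, h]
  · rw [show x = 0 from Subtype.ext (coe_eq_zero h x)]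
    simp

end UV

lemma Urep.coe_f_apply (i j a : ℕ) (x : UV i j a) :
    Subtype.val ((Urep i j).f a x) = if i ≤ a + 1 ∧ a + 1 ≤ j then (x : ℂ) else 0 := by
  unfold Urep
  dsimp only
  by_cases h : i ≤ a + 1 ∧ a + 1 ≤ j
  · have hle : UV i j a ≤ UV i j (a + 1) := by
      unfold UV
      rw [if_pos h]
      exact le_top
    rw [dif_pos hle, if_pos h]
    rfl
  · rw [if_neg h]
    split_ifs
    · exact UV.coe_eq_zero h _
    · rfl

section Potential

variable {k l i j : ℕ} {c : ℕ → ℂ}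

/-- For `c = coord ψ`, the scalar form of `delta (ofCoord u) = ψ`. -/
def IsPotential (k l i j : ℕ) (c u : ℕ → ℂ) : Prop :=
  (∀ a, ¬(k ≤ a ∧ a ≤ l ∧ i ≤ a ∧ a ≤ j) → u a = 0) ∧
    ∀ a, k ≤ a → a ≤ l → i ≤ a + 1 → a + 1 ≤ j → c a = u a - u (a + 1)

lemma isPotential_tailSum (hc : ∀ a, ¬(k ≤ a ∧ a ≤ l ∧ i ≤ a + 1 ∧ a + 1 ≤ j) → c a = 0)
    (h : i ≤ k ∨ ∑ a ∈ range (l + 1), c a = 0) :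
    IsPotential k l i j c fun a => if i ≤ a ∧ k ≤ a then ∑ b ∈ Ico a (l + 1), c b else 0 := by
  constructor
  · intro a ha
    dsimp only
    split_ifs
    · exact sum_eq_zero fun b hb => hc b (by simp only [mem_Ico] at hb; omega)
    · rfl
  · intro a hka hal hia hja
    dsimp only
    by_cases hi : i ≤ a
    · rw [if_pos ⟨hi, hka⟩, if_pos ⟨by omega, by omega⟩, sum_eq_sum_Ico_succ_bot (by omega)]
      ring
    · have htotal : ∑ b ∈ range (l + 1), c b = 0 := h.resolve_left (by omega)
      have hbelow : ∑ b ∈ range a, c b = 0 :=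
        sum_eq_zero fun b hb => hc b (by simp only [mem_range] at hb; omega)
      rw [range_eq_Ico, ← sum_Ico_consecutive _ (Nat.zero_le a) (by omega : a ≤ l + 1),
        sum_eq_sum_Ico_succ_bot (by omega : a < l + 1), ← range_eq_Ico, hbelow] at htotal
      rw [if_neg (by omega), if_pos ⟨by omega, by omega⟩]
      linear_combination htotal

lemma isPotential_prefixSum (hc : ∀ a, ¬(k ≤ a ∧ a ≤ l ∧ i ≤ a + 1 ∧ a + 1 ≤ j) → c a = 0)
    (h : j ≤ l) :
    IsPotential k l i j c fun a => if a ≤ j ∧ a ≤ l then -∑ b ∈ range a, c b else 0 := by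
  constructor
  · intro a ha
    dsimp only
    split_ifs
    · rw [sum_eq_zero fun b hb => hc b (by simp only [mem_range] at hb; omega), neg_zero]
    · rfl
  · intro a hka hal hia hja
    dsimp only
    rw [if_pos ⟨by omega, by omega⟩, if_pos ⟨by omega, by omega⟩, sum_range_succ]
    ring

end Potential

namespace Urep

section Cochain

variable {k l i j : ℕ} {σ : ℕ → ℕ}

noncomputable def coord : (∀ a, UV k l a →ₗ[ℂ] UV i j (σ a)) →ₗ[ℂ] ℕ → ℂ where
  toFun φ a := φ a (UV.gen k l a)
  map_add' _ _ := rfl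
  map_smul' _ _ := rfl

lemma coe_apply (φ : ∀ a, UV k l a →ₗ[ℂ] UV i j (σ a)) (a : ℕ) (x : UV k l a) :
    (φ a x : ℂ) = x * coord φ a :=
  UV.coe_map_apply (φ a) x

lemma coord_eq_zero (φ : ∀ a, UV k l a →ₗ[ℂ] UV i j (σ a)) {a : ℕ}
    (h : ¬(k ≤ a ∧ a ≤ l ∧ i ≤ σ a ∧ σ a ≤ j)) : coord φ a = 0 := by
  by_cases hkl : k ≤ a ∧ a ≤ l
  · exact UV.coe_eq_zero (by tauto) _
  · show (φ a (UV.gen k l a) : ℂ) = 0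
    rw [UV.gen_eq_zero hkl, map_zero]
    rfl

lemma cochain_ext {φ ψ : ∀ a, UV k l a →ₗ[ℂ] UV i j (σ a)} (h : ∀ a, coord φ a = coord ψ a) :
    φ = ψ := by
  funext a
  ext x
  rw [coe_apply, coe_apply, h]

noncomputable def ofCoord (u : ℕ → ℂ) (a : ℕ) : UV k l a →ₗ[ℂ] UV i j (σ a) :=
  (UV k l a).subtype.smulRight (u a • UV.gen i j (σ a))

lemma coord_ofCoord (u : ℕ → ℂ) {a : ℕ} (h : k ≤ a ∧ a ≤ l ∧ i ≤ σ a ∧ σ a ≤ j) :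
    coord (ofCoord u : ∀ a, UV k l a →ₗ[ℂ] UV i j (σ a)) a = u a := by
  show (UV.gen k l a : ℂ) • (u a • (UV.gen i j (σ a) : ℂ)) = u a
  simp [UV.coe_gen, h]

end Cochain

variable {k l i j : ℕ}

lemma coord_delta (φ : ∀ a, UV k l a →ₗ[ℂ] UV i j a) (a : ℕ) :
    coord (delta (Urep k l) (Urep i j) φ) a =
      (if i ≤ a + 1 ∧ a + 1 ≤ j then coord φ a else 0) -
        (if k ≤ a ∧ a ≤ l then coord φ (a + 1) else 0) := by
  show Subtype.val ((Urep i j).f a (φ a (UV.gen k l a))) -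
    (φ (a + 1) ((Urep k l).f a (UV.gen k l a)) : ℂ) = _
  have hf := coe_f_apply k l a (UV.gen k l a)
  have hφ := coe_apply φ (a + 1) ((Urep k l).f a (UV.gen k l a))
  rw [coe_f_apply, coe_apply φ a, hφ, hf, UV.coe_gen]
  by_cases ha : k ≤ a ∧ a ≤ l
  · by_cases hb : k ≤ a + 1 ∧ a + 1 ≤ l
    · simp only [if_pos ha, if_pos hb, one_mul]
    · simp only [if_pos ha, if_neg hb, one_mul, zero_mul, coord_eq_zero φ (a := a + 1) (by omega)]
  · simp only [if_neg ha, zero_mul, coord_eq_zero φ (a := a) (by omega), ite_self]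

lemma delta_ofCoord {ψ : ∀ a, UV k l a →ₗ[ℂ] UV i j (a + 1)} {u : ℕ → ℂ}
    (hu : IsPotential k l i j (coord ψ) u) : delta (Urep k l) (Urep i j) (ofCoord u) = ψ := by
  have hcoord : ∀ a, coord (ofCoord u : ∀ a, UV k l a →ₗ[ℂ] UV i j a) a = u a := fun a => by
    by_cases ha : k ≤ a ∧ a ≤ l ∧ i ≤ a ∧ a ≤ j
    · exact coord_ofCoord u ha
    · rw [coord_eq_zero _ ha, hu.1 a ha]
  refine cochain_ext fun a => ?_
  by_cases ha : k ≤ a ∧ a ≤ l ∧ i ≤ a + 1 ∧ a + 1 ≤ j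
  · obtain ⟨hka, hal, hia, hja⟩ := ha
    rw [coord_delta, if_pos ⟨hia, hja⟩, if_pos ⟨hka, hal⟩, hcoord, hcoord, hu.2 a hka hal hia hja]
  · exact (coord_eq_zero _ ha).trans (coord_eq_zero _ ha).symm

noncomputable def coordSum (k l i j : ℕ) : (∀ a, UV k l a →ₗ[ℂ] UV i j (a + 1)) →ₗ[ℂ] ℂ :=
  ∑ a ∈ range (l + 1), LinearMap.proj a ∘ₗ coord

lemma coordSum_apply (ψ : ∀ a, UV k l a →ₗ[ℂ] UV i j (a + 1)) :
    coordSum k l i j ψ = ∑ a ∈ range (l + 1), coord ψ a := by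
  simp [coordSum, LinearMap.sum_apply]

lemma coordSum_delta (hki : k < i) (hlj : l < j) (φ : ∀ a, UV k l a →ₗ[ℂ] UV i j a) :
    coordSum k l i j (delta (Urep k l) (Urep i j) φ) = 0 := by
  have hstep : ∀ a ∈ range (l + 1),
      coord (delta (Urep k l) (Urep i j) φ) a = coord φ a - coord φ (a + 1) := by
    intro a ha
    rw [mem_range] at ha
    rw [coord_delta]
    split_ifs with h1 h2 h2
    · rfl
    · rw [coord_eq_zero φ (a := a + 1) (by omega)]
    all_goals
      rw [coord_eq_zero φ (a := a) (by omega), coord_eq_zero φ (a := a + 1) (by omega)]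
  refine (coordSum_apply _).trans ?_
  rw [sum_congr rfl hstep, sum_range_sub', coord_eq_zero φ (a := 0) (by omega),
    coord_eq_zero φ (a := l + 1) (by omega), sub_zero]

lemma coordSum_surjective (hkl : k ≤ l) (hil : i ≤ l + 1) (hlj : l + 1 ≤ j) :
    Function.Surjective (coordSum k l i j) := by
  intro z
  refine ⟨ofCoord (Pi.single l z), ?_⟩
  rw [coordSum_apply, sum_eq_single_of_mem l (self_mem_range_succ l) fun a _ ha => ?_,
    coord_ofCoord _ ⟨hkl, le_rfl, hil, hlj⟩, Pi.single_eq_same]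
  by_cases h : k ≤ a ∧ a ≤ l ∧ i ≤ a + 1 ∧ a + 1 ≤ j
  · rw [coord_ofCoord _ h, Pi.single_eq_of_ne ha]
  · exact coord_eq_zero _ h

lemma range_delta_eq_ker_coordSum (hki : k < i) (hlj : l < j) :
    LinearMap.range (delta (Urep k l) (Urep i j)) = LinearMap.ker (coordSum k l i j) := by
  apply le_antisymm
  · rintro _ ⟨φ, rfl⟩
    exact coordSum_delta hki hlj φ
  · intro ψ hψ
    have hsum : ∑ a ∈ range (l + 1), coord ψ a = 0 := (coordSum_apply ψ).symm.trans hψ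
    exact ⟨_, delta_ofCoord (isPotential_tailSum (fun a ha => coord_eq_zero ψ ha) (Or.inr hsum))⟩

lemma range_delta_eq_top (h : i ≤ k ∨ j ≤ l ∨ l + 2 ≤ i) :
    LinearMap.range (delta (Urep k l) (Urep i j)) = ⊤ := by
  refine LinearMap.range_eq_top.2 fun ψ => ?_
  have hc : ∀ a, ¬(k ≤ a ∧ a ≤ l ∧ i ≤ a + 1 ∧ a + 1 ≤ j) → coord ψ a = 0 :=
    fun a ha => coord_eq_zero ψ ha
  rcases h with h | h | h
  · exact ⟨_, delta_ofCoord (isPotential_tailSum hc (Or.inl h))⟩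
  · exact ⟨_, delta_ofCoord (isPotential_prefixSum hc h)⟩
  · have hzero : ∑ a ∈ range (l + 1), coord ψ a = 0 :=
      sum_eq_zero fun a ha => hc a (by rw [mem_range] at ha; omega)
    exact ⟨_, delta_ofCoord (isPotential_tailSum hc (Or.inr hzero))⟩

end Urep

theorem stmt1_general (i j k l : ℕ) :
    ext1Dim (Urep k l) (Urep i j) =
      if k + 1 ≤ i ∧ i ≤ l + 1 ∧ l + 1 ≤ j then 1 else 0 := by
  unfold ext1Dim
  split_ifs with h
  · obtain ⟨hki, hil, hlj⟩ := h
    rw [Urep.range_delta_eq_ker_coordSum hki hlj]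
    exact ((Urep.coordSum k l i j).quotKerEquivOfSurjective
      (Urep.coordSum_surjective (by omega) hil hlj)).finrank_eq.trans (Module.finrank_self ℂ)
  · rw [Urep.range_delta_eq_top (by omega)]
    exact Module.finrank_zero_of_subsingleton

/-- For the equioriented type `A_n` quiver, `dim Ext¹(U_{k,l}, U_{i,j}) = 1` if
`k+1 ≤ i ≤ l+1 ≤ j`, and `0` otherwise. -/
theorem stmt1 (n i j k l : ℕ) (hi : 1 ≤ i) (hij : i ≤ j) (hjn : j ≤ n)
    (hk : 1 ≤ k) (hkl : k ≤ l) (hln : l ≤ n) :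
    ext1Dim (Urep k l) (Urep i j) =
      if k + 1 ≤ i ∧ i ≤ l + 1 ∧ l + 1 ≤ j then 1 else 0 :=
  stmt1_general i j k l
end

section
/- The number of non-crossing arc diagrams on n points equals the n-th Catalan number C_n = (1/(n+1)) binom(2n, n). -/
/-!
Point `0` of a non-crossing diagram on `m + 1` points is the left end of at most one arc
`(0, k)`, and every other arc lies either strictly under it or entirely at or after `k`:
arcs may meet only where one ends and the next begins. Removing `(0, k)` thus splits the
diagram into one on the `k - 1` points strictly inside and one on the points from `k` on; an
isolated `0` is the case `k = m + 1`. This is the Catalan recurrence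
`C (m + 1) = ∑_{i + j = m} C i * C j`. Working with diagrams on intervals `[a, a + m)` of `ℕ`
keeps both pieces of the same kind.
-/

open Finset

namespace ArcDiagram

variable {α β : Type*}

def IsNoncrossing [Preorder α] (s : Finset (α × α)) : Prop :=
  ∀ p ∈ s, ∀ q ∈ s, p ≠ q → ¬(p.1 ≤ q.1 ∧ q.1 < p.2 ∧ p.2 ≤ q.2)

section Preorder

variable [Preorder α] {s u v : Finset (α × α)} {a j : α}

theorem IsNoncrossing.mono (hv : IsNoncrossing v) (h : u ⊆ v) : IsNoncrossing u :=
  fun p hp q hq => hv p (h hp) q (h hq)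

theorem IsNoncrossing.union [DecidableEq α] (hu : IsNoncrossing u) (hv : IsNoncrossing v)
    (h : ∀ p ∈ u, ∀ q ∈ v, p.2 ≤ q.1) : IsNoncrossing (u ∪ v) := by
  intro p hp q hq hne
  rcases mem_union.1 hp with hp | hp <;> rcases mem_union.1 hq with hq | hq
  · exact hu p hp q hq hne
  · have := h p hp q hq
    rintro ⟨_, _, _⟩
    order
  · have := h q hq p hp
    rintro ⟨_, _, _⟩
    order
  · exact hv p hp q hq hne

theorem IsNoncrossing.insert [DecidableEq α] (hs : IsNoncrossing s)
    (h : ∀ p ∈ s, a < p.1 ∧ (p.2 < j ∨ j ≤ p.1)) : IsNoncrossing (insert (a, j) s) := by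
  intro p hp q hq hne
  rcases mem_insert.1 hp with rfl | hp <;> rcases mem_insert.1 hq with rfl | hq
  · exact absurd rfl hne
  · obtain ⟨-, h | h⟩ := h q hq <;> rintro ⟨_, _, _⟩ <;> order
  · have := (h p hp).1
    rintro ⟨_, _, _⟩
    order
  · exact hs p hp q hq hne

theorem isNoncrossing_map_iff [Preorder β] (f : α ↪o β) :
    IsNoncrossing (s.map (f.toEmbedding.prodMap f.toEmbedding)) ↔ IsNoncrossing s := by
  simp only [IsNoncrossing, Finset.forall_mem_map, Function.Embedding.coe_prodMap,
    RelEmbedding.coe_toEmbedding, ne_eq, (f.injective.prodMap f.injective).eq_iff,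
    Prod.map_fst, Prod.map_snd, f.le_iff_le, f.lt_iff_lt]

end Preorder

theorem IsNoncrossing.nested_or_right [LinearOrder α] {s : Finset (α × α)} {a j : α}
    {p : α × α} (hs : IsNoncrossing s) (haj : (a, j) ∈ s) (hlt : a < j) (hp : p ∈ s)
    (hne : p ≠ (a, j)) (hap : a ≤ p.1) (hpp : p.1 < p.2) :
    a < p.1 ∧ (p.2 < j ∨ j ≤ p.1) := by
  have := hs _ haj p hp hne.symm
  have := hs p hp _ haj hne
  grind

def ArcsWithin (a m : ℕ) (s : Finset (ℕ × ℕ)) : Prop :=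
  ∀ p ∈ s, a ≤ p.1 ∧ p.1 < p.2 ∧ p.2 < a + m

open Classical in
noncomputable def diagrams (a m : ℕ) : Finset (Finset (ℕ × ℕ)) :=
  {s ∈ (Ico a (a + m) ×ˢ Ico a (a + m)).powerset | ArcsWithin a m s ∧ IsNoncrossing s}

variable {a m : ℕ} {s u v : Finset (ℕ × ℕ)}

theorem mem_diagrams : s ∈ diagrams a m ↔ ArcsWithin a m s ∧ IsNoncrossing s := by
  classical
  simp only [diagrams, mem_filter, mem_powerset, and_iff_right_iff_imp]
  rintro ⟨hs, -⟩ p hp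
  have := hs p hp
  simp only [mem_product, mem_Ico]
  omega

theorem diagrams_zero : diagrams a 0 = {∅} := by
  ext s
  simp only [mem_diagrams, mem_singleton, ArcsWithin]
  constructor
  · rintro ⟨hs, -⟩
    exact eq_empty_of_forall_notMem fun p hp => by have := hs p hp; omega
  · rintro rfl
    simp [IsNoncrossing]

/-- Point `a`, then a block of `ij.1` points carrying `u`, then a block of `ij.2` points carrying
`v`; `a` is joined to the first point of the second block when that block is nonempty. -/
noncomputable def glue (a : ℕ) (ij : ℕ × ℕ) (u v : Finset (ℕ × ℕ)) : Finset (ℕ × ℕ) :=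
  if ij.2 = 0 then u ∪ v else insert (a, a + ij.1 + 1) (u ∪ v)

section Glue

variable {ij : ℕ × ℕ} {p : ℕ × ℕ}

theorem mem_glue : p ∈ glue a ij u v ↔ (ij.2 ≠ 0 ∧ p = (a, a + ij.1 + 1)) ∨ p ∈ u ∨ p ∈ v := by
  unfold glue
  split_ifs with h <;> simp [h]

variable (hu : ArcsWithin (a + 1) ij.1 u) (hv : ArcsWithin (a + ij.1 + 1) ij.2 v)
include hu hv

theorem glue_mem_diagrams (hu' : IsNoncrossing u) (hv' : IsNoncrossing v) :
    glue a ij u v ∈ diagrams a (ij.1 + ij.2 + 1) := by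
  have huv : IsNoncrossing (u ∪ v) :=
    hu'.union hv' fun p hp q hq => by have := hu p hp; have := hv q hq; omega
  refine mem_diagrams.2 ⟨fun p hp => ?_, ?_⟩
  · rcases mem_glue.1 hp with ⟨hj, rfl⟩ | hp | hp
    · dsimp only; omega
    · have := hu p hp; omega
    · have := hv p hp; omega
  · unfold glue
    split_ifs
    · exact huv
    · refine huv.insert fun p hp => ?_
      rcases mem_union.1 hp with hp | hp
      · have := hu p hp; omega
      · have := hv p hp; omega

theorem fst_mem_glue_iff {k : ℕ} : (a, k) ∈ glue a ij u v ↔ ij.2 ≠ 0 ∧ k = a + ij.1 + 1 := by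
  rw [mem_glue]
  grind [ArcsWithin]

theorem filter_glue_snd_lt : (glue a ij u v).filter (·.2 < a + ij.1 + 1) = u := by
  ext p
  rw [mem_filter, mem_glue]
  grind [ArcsWithin]

theorem filter_glue_le_fst : (glue a ij u v).filter (a + ij.1 + 1 ≤ ·.1) = v := by
  ext p
  rw [mem_filter, mem_glue]
  grind [ArcsWithin]

end Glue

theorem glue_inj {ij ij' : ℕ × ℕ} {u' v' : Finset (ℕ × ℕ)} (hm : ij.1 + ij.2 = ij'.1 + ij'.2)
    (hu : ArcsWithin (a + 1) ij.1 u) (hv : ArcsWithin (a + ij.1 + 1) ij.2 v)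
    (hu' : ArcsWithin (a + 1) ij'.1 u') (hv' : ArcsWithin (a + ij'.1 + 1) ij'.2 v')
    (h : glue a ij u v = glue a ij' u' v') : ij = ij' ∧ u = u' ∧ v = v' := by
  have hij : ij = ij' := by
    have key (k : ℕ) : ij.2 ≠ 0 ∧ k = a + ij.1 + 1 ↔ ij'.2 ≠ 0 ∧ k = a + ij'.1 + 1 := by
      rw [← fst_mem_glue_iff hu hv, ← fst_mem_glue_iff hu' hv', h]
    have := key (a + ij.1 + 1)
    have := key (a + ij'.1 + 1)
    exact Prod.ext (by omega) (by omega)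
  subst hij
  refine ⟨rfl, ?_, ?_⟩
  · rw [← filter_glue_snd_lt hu hv, h, filter_glue_snd_lt hu' hv']
  · rw [← filter_glue_le_fst hu hv, h, filter_glue_le_fst hu' hv']

theorem exists_glue_eq (hs : s ∈ diagrams a (m + 1)) :
    ∃ ij ∈ antidiagonal m, ∃ u ∈ diagrams (a + 1) ij.1, ∃ v ∈ diagrams (a + ij.1 + 1) ij.2,
      glue a ij u v = s := by
  obtain ⟨hw, hnc⟩ := mem_diagrams.1 hs
  by_cases h : ∃ k, (a, k) ∈ s
  · obtain ⟨k, hk⟩ := h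
    obtain ⟨-, hak, hkm⟩ : a ≤ a ∧ a < k ∧ k < a + (m + 1) := hw _ hk
    obtain ⟨i, rfl⟩ := Nat.exists_eq_add_of_lt hak
    obtain ⟨j, rfl⟩ := Nat.exists_eq_add_of_lt (show i < m by omega)
    have hsplit (p) (hp : p ∈ s) (hne : p ≠ (a, a + i + 1)) :=
      hnc.nested_or_right hk hak hp hne (hw p hp).1 (hw p hp).2.1
    refine ⟨(i, j + 1), HasAntidiagonal.mem_antidiagonal.2 (by omega),
      s.filter (·.2 < a + i + 1), mem_diagrams.2 ⟨?_, hnc.mono (filter_subset _ _)⟩,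
      s.filter (a + i + 1 ≤ ·.1), mem_diagrams.2 ⟨?_, hnc.mono (filter_subset _ _)⟩, ?_⟩
    · intro p hp
      rw [mem_filter] at hp
      grind [ArcsWithin]
    · intro p hp
      rw [mem_filter] at hp
      grind [ArcsWithin]
    · ext p
      rw [mem_glue, mem_filter, mem_filter]
      grind
  · rw [not_exists] at h
    refine ⟨(m, 0), by simp, s, mem_diagrams.2 ⟨fun p hp => ?_, hnc⟩, ∅, by simp [diagrams_zero],
      by simp [glue]⟩
    have := hw p hp
    have : p.1 ≠ a := fun h' => h p.2 (h' ▸ hp)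
    omega

theorem card_diagrams_succ (a m : ℕ) :
    #(diagrams a (m + 1)) =
      ∑ ij ∈ antidiagonal m, #(diagrams (a + 1) ij.1) * #(diagrams (a + ij.1 + 1) ij.2) := by
  simp only [← card_product]
  rw [← card_sigma]
  refine (card_bij (fun x _ => glue a x.1 x.2.1 x.2.2) ?_ ?_ ?_).symm
  · rintro ⟨ij, u, v⟩ hx
    simp only [mem_sigma, mem_product, HasAntidiagonal.mem_antidiagonal, mem_diagrams] at hx
    obtain ⟨rfl, hu, hv⟩ := hx
    exact glue_mem_diagrams hu.1 hv.1 hu.2 hv.2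
  · rintro ⟨ij, u, v⟩ hx ⟨ij', u', v'⟩ hx' h
    simp only [mem_sigma, mem_product, HasAntidiagonal.mem_antidiagonal, mem_diagrams] at hx hx'
    obtain ⟨rfl, rfl, rfl⟩ :=
      glue_inj (hx.1.trans hx'.1.symm) hx.2.1.1 hx.2.2.1 hx'.2.1.1 hx'.2.2.1 h
    rfl
  · intro s hs
    obtain ⟨ij, hij, u, hu, v, hv, rfl⟩ := exists_glue_eq hs
    exact ⟨⟨ij, u, v⟩, mem_sigma.2 ⟨hij, mem_product.2 ⟨hu, hv⟩⟩, rfl⟩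

theorem card_diagrams (a m : ℕ) : #(diagrams a m) = catalan m := by
  induction m using Nat.strong_induction_on generalizing a with
  | _ m ih =>
    rcases m with _ | m
    · simp [diagrams_zero]
    · rw [card_diagrams_succ, catalan_succ']
      refine sum_congr rfl fun ij hij => ?_
      rw [HasAntidiagonal.mem_antidiagonal] at hij
      rw [ih _ (by omega), ih _ (by omega)]

def finArcs (n : ℕ) : Fin n × Fin n ↪ ℕ × ℕ :=
  (Fin.valOrderEmb n).toEmbedding.prodMap (Fin.valOrderEmb n).toEmbedding

theorem map_finArcs_mem_diagrams_iff {n : ℕ} {A : Finset (Fin n × Fin n)} :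
    A.map (finArcs n) ∈ diagrams 0 n ↔ (∀ p ∈ A, p.1 < p.2) ∧ IsNoncrossing A := by
  rw [mem_diagrams, finArcs, isNoncrossing_map_iff, ArcsWithin, forall_mem_map]
  simp [Fin.valOrderEmb]

theorem card_fin_diagrams (n : ℕ) :
    Nat.card {A : Finset (Fin n × Fin n) // (∀ p ∈ A, p.1 < p.2) ∧ IsNoncrossing A} =
      catalan n := by
  classical
  rw [Nat.card_eq_fintype_card, Fintype.card_subtype, ← card_diagrams 0 n]
  refine card_bij (fun A _ => A.map (finArcs n)) (fun A hA => ?_) (fun A _ B _ => map_inj.1)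
    (fun s hs => ?_)
  · exact map_finArcs_mem_diagrams_iff.2 (mem_filter.1 hA).2
  · obtain ⟨A, -, rfl⟩ : ∃ A ⊆ univ, s = A.map (finArcs n) := by
      refine subset_map_iff.1 fun p hp => ?_
      have := (mem_diagrams.1 hs).1 p hp
      exact mem_map.2 ⟨(⟨p.1, by omega⟩, ⟨p.2, by omega⟩), mem_univ _, rfl⟩
    exact ⟨A, mem_filter.2 ⟨mem_univ _, map_finArcs_mem_diagrams_iff.1 hs⟩, rfl⟩

end ArcDiagram

open Classical in
/-- The number of non-crossing arc diagrams on `n` points equals the `n`-th Catalan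
number `C_n = (1/(n+1)) · binom(2n, n)`. -/
theorem stmt5 (n : ℕ) :
    Fintype.card {A : Finset (Fin n × Fin n) //
        (∀ p ∈ A, p.1 < p.2) ∧
        ∀ p ∈ A, ∀ q ∈ A, p ≠ q → ¬(p.1 ≤ q.1 ∧ q.1 < p.2 ∧ p.2 ≤ q.2)} =
      catalan n ∧
    catalan n = (2 * n).choose n / (n + 1) :=
  ⟨Fintype.card_eq_nat_card.trans (ArcDiagram.card_fin_diagrams n), catalan_eq_centralBinom_div n⟩
end

section
/- For the Weyl group element w_i = w_n w_{n−1} ··· w_1 of S_{n+1+k} (where w_j = s_{h_j+1} s_{h_j+2} ··· s_{h_j+j} and ℓ_j = h_j + j), the action on {1,...,ℓ_n} satisfies: if ℓ_j = ℓ_{j−1} + 1 then w_i(ℓ_j) = h_j + (n − j + 2); and if ℓ_j = ℓ_{j−1} + 2 then w_i(ℓ_j − 1) = h_j and w_i(ℓ_j) = h_j + n + 1. -/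
/-!
Each `w_t` is the cycle `h_t + 1 ↦ h_t + 2 ↦ ⋯ ↦ ℓ_t + 1 ↦ h_t + 1`, and `w_1, …, w_{t-1}` fix
`ℓ_t + 1`, so `w_t ⋯ w_1` sends `ℓ_t + 1` to `h_t + 1`. Because `h` grows by at most one per step,
a value strictly between `h_t + 1` and `ℓ_t + 2` is pushed up by exactly one by every later `w_s`,
while a value `≤ h_t` is fixed by all of them. Tracking `ℓ_j` (and `ℓ_j - 1`) through `w_j ⋯ w_1`
and then through the remaining `n - j` factors gives the formulas.
-/

/-- `h_s = #{t : i_t < s}` (so `h₁ = 0` since all entries are `≥ 1`). -/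
def hFun (L : List ℕ) (s : ℕ) : ℕ := L.countP fun x => decide (x < s)

/-- `ℓ_j = h_j + j` (with `ℓ₀ = 0`). -/
def lFun (L : List ℕ) (j : ℕ) : ℕ := hFun L j + j

/-- `w_j = s_{h+1} s_{h+2} ⋯ s_{h+j}` where `h = h_j` and `s_m = (m, m+1)`. -/
def wk (h j : ℕ) : Equiv.Perm ℕ :=
  ((List.range j).map fun t => Equiv.swap (h + 1 + t) (h + 2 + t)).prod

/-- `w_i = w_n w_{n-1} ⋯ w_1` (applied as a function, `w_1` acts first). -/
def wBig (L : List ℕ) (n : ℕ) : Equiv.Perm ℕ :=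
  ((List.range n).map fun t => wk (hFun L (n - t)) (n - t)).prod

lemma wk_succ (h m : ℕ) : wk h (m + 1) = wk h m * Equiv.swap (h + 1 + m) (h + 2 + m) := by
  simp [wk, List.range_succ]

lemma wk_apply (h m x : ℕ) :
    wk h m x = if h + 1 ≤ x ∧ x ≤ h + m then x + 1
      else if x = h + m + 1 ∧ 1 ≤ m then h + 1 else x := by
  induction m generalizing x with
  | zero =>
    simp only [wk, List.range_zero, List.map_nil, List.prod_nil, Equiv.Perm.one_apply]
    split_ifs <;> omega
  | succ m ih =>
    rw [wk_succ, Equiv.Perm.mul_apply, Equiv.swap_apply_def]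
    split_ifs <;> rw [ih] <;> split_ifs <;> omega

lemma wk_apply_of_lt_of_le {h m x : ℕ} (hlo : h < x) (hhi : x ≤ h + m) : wk h m x = x + 1 := by
  rw [wk_apply, if_pos ⟨hlo, hhi⟩]

lemma wk_apply_add_succ {h m : ℕ} (hm : m ≠ 0) : wk h m (h + m + 1) = h + 1 := by
  rw [wk_apply, if_neg (by omega), if_pos ⟨rfl, Nat.one_le_iff_ne_zero.mpr hm⟩]

lemma wk_apply_of_le {h m x : ℕ} (hx : x ≤ h) : wk h m x = x := by
  rw [wk_apply]; split_ifs <;> omega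

lemma wk_apply_of_lt {h m x : ℕ} (hx : h + m + 1 < x) : wk h m x = x := by
  rw [wk_apply]; split_ifs <;> omega

lemma wBig_succ_apply (L : List ℕ) (m x : ℕ) :
    wBig L (m + 1) x = wk (hFun L (m + 1)) (m + 1) (wBig L m x) := by
  simp [wBig, List.range_succ_eq_map, Function.comp_def]

section hFun

variable (L : List ℕ)

@[simp]
lemma hFun_zero : hFun L 0 = 0 := by
  simp [hFun]

lemma hFun_succ (s : ℕ) : hFun L (s + 1) = hFun L s + L.count s := by
  induction L with
  | nil => simp [hFun]
  | cons a t ih =>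
    simp only [hFun, List.countP_cons, List.count_cons] at ih ⊢
    grind

lemma hFun_mono : Monotone (hFun L) := fun _ _ hst =>
  List.countP_mono_left fun x _ hx => by simp only [decide_eq_true_eq] at hx ⊢; omega

variable {L}

lemma hFun_succ_le (hL : L.Nodup) (s : ℕ) : hFun L (s + 1) ≤ hFun L s + 1 := by
  rw [hFun_succ]
  exact Nat.add_le_add_left (List.nodup_iff_count_le_one.mp hL s) _

lemma hFun_add_le (hL : L.Nodup) (s d : ℕ) : hFun L (s + d) ≤ hFun L s + d := by
  induction d with
  | zero => rfl
  | succ d ih => have := hFun_succ_le hL (s + d); rw [← add_assoc]; omega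

end hFun

section wBig

variable {L : List ℕ}

lemma wBig_apply_of_lFun_add_one_lt {m x : ℕ} (hx : lFun L m + 1 < x) : wBig L m x = x := by
  induction m with
  | zero => simp [wBig]
  | succ m ih =>
    have := hFun_mono L (Nat.le_add_right m 1)
    unfold lFun at *
    rw [wBig_succ_apply, ih (by omega), wk_apply_of_lt (by omega)]

lemma wBig_apply_lFun_add_one (m : ℕ) : wBig L m (lFun L m + 1) = hFun L m + 1 := by
  cases m with
  | zero => simp [wBig, lFun]
  | succ m =>
    have := hFun_mono L (Nat.le_add_right m 1)
    rw [wBig_succ_apply, wBig_apply_of_lFun_add_one_lt (by unfold lFun; omega)]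
    exact wk_apply_add_succ m.succ_ne_zero

lemma wBig_add_apply_of_eq_hFun_add (hL : L.Nodup) {j c x : ℕ} (hc : 2 ≤ c) (hcj : c ≤ j + 1)
    (hx : wBig L j x = hFun L j + c) (d : ℕ) : wBig L (j + d) x = hFun L j + c + d := by
  induction d with
  | zero => exact hx
  | succ d ih =>
    have hup := hFun_add_le hL j (d + 1)
    have hlo := hFun_mono L (Nat.le_add_right j (d + 1))
    rw [← add_assoc] at hup hlo ⊢
    rw [wBig_succ_apply, ih, wk_apply_of_lt_of_le (by omega) (by omega), add_assoc]

lemma wBig_add_apply_of_le_hFun {m x : ℕ} (hx : wBig L m x ≤ hFun L (m + 1)) (d : ℕ) :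
    wBig L (m + d) x = wBig L m x := by
  induction d with
  | zero => rfl
  | succ d ih =>
    have := hFun_mono L (show m + 1 ≤ m + d + 1 by omega)
    rw [← add_assoc, wBig_succ_apply, ih, wk_apply_of_le (by omega)]

end wBig

theorem stmt14_general (n : ℕ) (L : List ℕ) (hs : L.Pairwise (· < ·))
    (j : ℕ) (h1 : 1 ≤ j) (hj : j ≤ n) :
    (lFun L j = lFun L (j - 1) + 1 →
      wBig L n (lFun L j) = hFun L j + (n - j + 2)) ∧
    (lFun L j = lFun L (j - 1) + 2 →
      wBig L n (lFun L j - 1) = hFun L j ∧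
      wBig L n (lFun L j) = hFun L j + n + 1) := by
  obtain ⟨m, rfl⟩ : ∃ m, j = m + 1 := ⟨j - 1, by omega⟩
  obtain ⟨d, rfl⟩ : ∃ d, n = m + 1 + d := ⟨n - (m + 1), by omega⟩
  have hL : L.Nodup := hs.nodup
  have hprev := wBig_apply_lFun_add_one (L := L) m
  simp only [Nat.add_sub_cancel, lFun] at hprev ⊢
  refine ⟨fun hstep => ?_, fun hstep => ⟨?_, ?_⟩⟩
  · have hwj : wBig L (m + 1) (hFun L (m + 1) + (m + 1)) = hFun L (m + 1) + 2 := by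
      rw [wBig_succ_apply, show hFun L (m + 1) + (m + 1) = hFun L m + m + 1 by omega, hprev,
        wk_apply_of_lt_of_le (by omega) (by omega)]
      omega
    rw [wBig_add_apply_of_eq_hFun_add hL le_rfl (by omega) hwj]
    omega
  · have hwj : wBig L m (hFun L (m + 1) + (m + 1) - 1) = hFun L (m + 1) := by
      rw [show hFun L (m + 1) + (m + 1) - 1 = hFun L m + m + 1 by omega, hprev]
      omega
    rw [show m + 1 + d = m + (d + 1) by omega, wBig_add_apply_of_le_hFun (by omega), hwj]
  · have hwj : wBig L (m + 1) (hFun L (m + 1) + (m + 1)) = hFun L (m + 1) + (m + 2) := by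
      rw [wBig_succ_apply, wBig_apply_of_lFun_add_one_lt (by unfold lFun; omega),
        wk_apply_of_lt_of_le (by omega) (by omega)]
      omega
    rw [wBig_add_apply_of_eq_hFun_add hL (by omega) le_rfl hwj]
    omega

/-- The action of `w_i` on `{1,…,ℓ_n}`: if `ℓ_j = ℓ_{j−1} + 1` then
`w_i(ℓ_j) = h_j + (n − j + 2)`; if `ℓ_j = ℓ_{j−1} + 2` then `w_i(ℓ_j − 1) = h_j` and
`w_i(ℓ_j) = h_j + n + 1`. -/
theorem stmt14 (n : ℕ) (L : List ℕ) (hs : L.Pairwise (· < ·))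
    (hr : ∀ x ∈ L, 1 ≤ x ∧ x ≤ n - 1)
    (j : ℕ) (h1 : 1 ≤ j) (hj : j ≤ n) :
    (lFun L j = lFun L (j - 1) + 1 →
      wBig L n (lFun L j) = hFun L j + (n - j + 2)) ∧
    (lFun L j = lFun L (j - 1) + 2 →
      wBig L n (lFun L j - 1) = hFun L j ∧
      wBig L n (lFun L j) = hFun L j + n + 1) :=
  stmt14_general n L hs j h1 hj
end

section
/- The map A ↦ op(A*) on non-crossing arc diagrams on n points is an involution, where A* is the dual arc diagram and op is induced by the symmetry i ↦ n+1−i. -/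
/-- An arc diagram on `n` points: a set of pairs `(i,j)` with `1 ≤ i < j ≤ n`. -/
def IsArcDiagram (n : ℕ) (A : Set (ℕ × ℕ)) : Prop :=
  ∀ p ∈ A, 1 ≤ p.1 ∧ p.1 < p.2 ∧ p.2 ≤ n

/-- Non-crossing: no two distinct arcs `(i,j)`, `(k,l)` satisfy `i ≤ k < j ≤ l`. -/
def NonCrossing (A : Set (ℕ × ℕ)) : Prop :=
  ∀ p ∈ A, ∀ q ∈ A, p ≠ q → ¬(p.1 ≤ q.1 ∧ q.1 < p.2 ∧ p.2 ≤ q.2)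

/-- `(i,j)` is a chain of `A`: a (possibly empty) sequence of consecutive arcs from `i`
to `j`. -/
def ArcChain (A : Set (ℕ × ℕ)) (i j : ℕ) : Prop :=
  Relation.ReflTransGen (fun a b => (a, b) ∈ A) i j

/-- A complete chain: a chain such that no arc of `A` ends at `i` and no arc of `A`
starts at `j`. -/
def IsCompleteChain (A : Set (ℕ × ℕ)) (i j : ℕ) : Prop :=
  ArcChain A i j ∧ (∀ a, (a, i) ∉ A) ∧ ∀ b, (j, b) ∉ A

/-- The dual arc diagram `A* = {(i−1, j) : i ≥ 2, (i,j) a complete chain of A}`. -/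
def dualArc (n : ℕ) (A : Set (ℕ × ℕ)) : Set (ℕ × ℕ) :=
  {p | ∃ i j, 2 ≤ i ∧ i ≤ j ∧ j ≤ n ∧ IsCompleteChain A i j ∧ p = (i - 1, j)}

/-- The symmetry `op` induced by `i ↦ n + 1 − i`. -/
def opArc (n : ℕ) (A : Set (ℕ × ℕ)) : Set (ℕ × ℕ) :=
  (fun p : ℕ × ℕ => (n + 1 - p.2, n + 1 - p.1)) '' A

/-!
Every point of a non-crossing diagram `A` has at most one outgoing and one incoming arc, so the
complete chains of `A` are the blocks of a non-crossing partition, and `A*` joins `m - 1` to `M`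
for each block `[m, M]` with `m ≥ 2`. Call a set of points saturated if it is a union of blocks.
The span `[m, M]` of a block is saturated, since an arc leaving or entering it would cross an arc
of the block; hence a chain of `A*` from `i` to `x` saturates `(i, x]`. This gives
`(i, j) ∈ A ↔ (i, j - 1)` is a complete chain of `A*`: below an arc `(i, j)`, the blocks met
while descending from `j - 1` lead down to `i`; conversely, saturation of `(i, j - 1]` forces the
arc into `j` to start at `i`. Since `op ((op B)*)` joins `i` to `j + 1` for each complete chain
`(i, j)` of `B`, applying this to `B = A*` gives the involution.
-/

def IsArcSaturated (A : Set (ℕ × ℕ)) (S : Set ℕ) : Prop :=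
  ∀ a b, (a, b) ∈ A → (a ∈ S ↔ b ∈ S)

theorem IsArcSaturated.union {A : Set (ℕ × ℕ)} {S T : Set ℕ} (hS : IsArcSaturated A S)
    (hT : IsArcSaturated A T) : IsArcSaturated A (S ∪ T) := fun a b hab => by
  simp only [Set.mem_union, hS a b hab, hT a b hab]

section ArcDiagram

variable {n : ℕ} {A : Set (ℕ × ℕ)}

theorem ArcChain.le (hA : IsArcDiagram n A) {u v : ℕ} (h : ArcChain A u v) : u ≤ v := by
  induction h with
  | refl => exact le_rfl
  | tail _ hstep ih => exact ih.trans (hA _ hstep).2.1.le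

theorem ArcChain.notMem_of_le_of_lt_of_lt (hA : IsArcDiagram n A) (hnc : NonCrossing A)
    {u v a b : ℕ} (h : ArcChain A u v) (hua : u ≤ a) (hav : a < v) (hvb : v < b) :
    (a, b) ∉ A := by
  induction h using Relation.ReflTransGen.head_induction_on with
  | refl => omega
  | @head u p hstep htail ih =>
    rcases Nat.lt_or_ge a p with hap | hpa
    · have hpv := ArcChain.le hA htail
      exact fun hab => hnc (u, p) hstep (a, b) hab (by simp; omega) ⟨hua, hap, by omega⟩
    · exact ih hpa

theorem ArcChain.notMem_of_lt_of_lt_of_le (hA : IsArcDiagram n A) (hnc : NonCrossing A)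
    {u v a b : ℕ} (h : ArcChain A u v) (hau : a < u) (hub : u < b) (hbv : b ≤ v) :
    (a, b) ∉ A := by
  induction h using Relation.ReflTransGen.head_induction_on with
  | refl => omega
  | @head u p hstep htail ih =>
    have hup := (hA _ hstep).2.1
    rcases Nat.lt_or_ge p b with hpb | hbp
    · exact ih (by omega) hpb
    · exact fun hab => hnc (a, b) hab (u, p) hstep (by simp; omega) ⟨by omega, hub, hbp⟩

theorem IsCompleteChain.isArcSaturated_Icc (hA : IsArcDiagram n A) (hnc : NonCrossing A)
    {m x : ℕ} (h : IsCompleteChain A m x) : IsArcSaturated A (Set.Icc m x) := by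
  obtain ⟨hchain, hnone_into, hnone_from⟩ := h
  intro a b hab
  have hlt := (hA _ hab).2.1
  simp only [Set.mem_Icc]
  constructor
  · rintro ⟨hma, hax⟩
    have hax' : a < x := lt_of_le_of_ne hax fun hax => hnone_from b (hax ▸ hab)
    exact ⟨by omega, not_lt.1 fun hxb =>
      hchain.notMem_of_le_of_lt_of_lt hA hnc hma hax' hxb hab⟩
  · rintro ⟨hmb, hbx⟩
    have hmb' : m < b := lt_of_le_of_ne hmb fun hmb => hnone_into a (hmb ▸ hab)
    exact ⟨not_lt.1 fun ham =>
      hchain.notMem_of_lt_of_lt_of_le hA hnc ham hmb' hbx hab, by omega⟩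

theorem exists_isCompleteChain_of_forall_notMem_from (hA : IsArcDiagram n A) {x : ℕ}
    (hx : ∀ b, (x, b) ∉ A) : ∃ m ≤ x, IsCompleteChain A m x := by
  classical
  have hex : ∃ m, ArcChain A m x := ⟨x, .refl⟩
  refine ⟨Nat.find hex, Nat.find_min' hex .refl, Nat.find_spec hex, fun a ha => ?_, hx⟩
  exact Nat.find_min hex (hA _ ha).2.1 ((Nat.find_spec hex).head ha)

theorem exists_isCompleteChain_of_forall_notMem_into (hA : IsArcDiagram n A) {j : ℕ}
    (hjn : j ≤ n) (hj : ∀ a, (a, j) ∉ A) :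
    ∃ M, j ≤ M ∧ M ≤ n ∧ IsCompleteChain A j M := by
  classical
  set M := Nat.findGreatest (ArcChain A j) n
  have hchain : ArcChain A j M := Nat.findGreatest_spec hjn .refl
  refine ⟨M, Nat.le_findGreatest hjn .refl, Nat.findGreatest_le n, hchain, hj, fun b hb => ?_⟩
  exact Nat.findGreatest_is_greatest (hA _ hb).2.1 (hA _ hb).2.2 (hchain.tail hb)

theorem mem_dualArc {a b : ℕ} :
    (a, b) ∈ dualArc n A ↔ 1 ≤ a ∧ a < b ∧ b ≤ n ∧ IsCompleteChain A (a + 1) b := by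
  simp only [dualArc, Set.mem_ofPred_eq, Prod.mk.injEq]
  constructor
  · rintro ⟨i, j, hi, hij, hjn, hc, rfl, rfl⟩
    rw [Nat.sub_add_cancel (by omega : 1 ≤ i)]
    exact ⟨by omega, by omega, hjn, hc⟩
  · rintro ⟨ha, hab, hbn, hc⟩
    exact ⟨a + 1, b, by omega, hab, hbn, hc, by omega, rfl⟩

theorem isArcDiagram_dualArc : IsArcDiagram n (dualArc n A) := fun _ hp => by
  obtain ⟨ha, hab, hbn, -⟩ := mem_dualArc.1 hp
  exact ⟨ha, hab, hbn⟩

theorem IsCompleteChain.sub_one_mem_dualArc {m x : ℕ} (h : IsCompleteChain A m x) (hm : 2 ≤ m)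
    (hmx : m ≤ x) (hxn : x ≤ n) : (m - 1, x) ∈ dualArc n A :=
  ⟨m, x, hm, hmx, hxn, h, rfl⟩

theorem isArcSaturated_Ioc_of_mem_dualArc (hA : IsArcDiagram n A) (hnc : NonCrossing A)
    {y x : ℕ} (h : (y, x) ∈ dualArc n A) : IsArcSaturated A (Set.Ioc y x) := by
  obtain ⟨-, -, -, hc⟩ := mem_dualArc.1 h
  have hblock : Set.Icc (y + 1) x = Set.Ioc y x := by
    ext; simp only [Set.mem_Icc, Set.mem_Ioc]; omega
  exact hblock ▸ hc.isArcSaturated_Icc hA hnc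

theorem ArcChain.isArcSaturated_Ioc_of_dualArc (hA : IsArcDiagram n A) (hnc : NonCrossing A)
    {i x : ℕ} (h : ArcChain (dualArc n A) i x) : IsArcSaturated A (Set.Ioc i x) := by
  induction h with
  | refl => simp [IsArcSaturated]
  | @tail y x hchain hstep ih =>
    have hyx := (isArcDiagram_dualArc _ hstep).2.1
    rw [← Set.Ioc_union_Ioc_eq_Ioc (ArcChain.le isArcDiagram_dualArc hchain) hyx.le]
    exact ih.union (isArcSaturated_Ioc_of_mem_dualArc hA hnc hstep)

theorem arcChain_dualArc_of_mem (hA : IsArcDiagram n A) (hnc : NonCrossing A) {i j : ℕ}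
    (hij : (i, j) ∈ A) : ArcChain (dualArc n A) i (j - 1) := by
  have hij_bounds := hA _ hij
  suffices key : ∀ x, i ≤ x → x < j → IsArcSaturated A (Set.Ioc x (j - 1)) →
      ArcChain (dualArc n A) i x from
    key (j - 1) (by omega) (by omega) (by simp [IsArcSaturated])
  intro x
  induction x using Nat.strong_induction_on with
  | _ x ih =>
  intro hix hxj hsat
  rcases hix.eq_or_lt with rfl | hix
  · exact .refl
  have hx : ∀ z, (x, z) ∉ A := fun z hxz => by
    have hz : z ∉ Set.Ioc x (j - 1) := fun hz => by simpa using (hsat x z hxz).2 hz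
    have hxz' := (hA _ hxz).2.1
    exact hnc (i, j) hij (x, z) hxz (by simp; omega) ⟨hix.le, hxj, by simp at hz; omega⟩
  obtain ⟨m, hmx, hc⟩ := exists_isCompleteChain_of_forall_notMem_from hA hx
  have him : i < m := not_le.1 fun hmi => by
    have := ((hc.isArcSaturated_Icc hA hnc i j hij).1 ⟨hmi, hix.le⟩).2
    omega
  have hstep : (m - 1, x) ∈ dualArc n A := hc.sub_one_mem_dualArc (by omega) hmx (by omega)
  have hsat' : IsArcSaturated A (Set.Ioc (m - 1) (j - 1)) := by
    rw [← Set.Ioc_union_Ioc_eq_Ioc (by omega : m - 1 ≤ x) (by omega : x ≤ j - 1)]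
    exact (isArcSaturated_Ioc_of_mem_dualArc hA hnc hstep).union hsat
  exact (ih (m - 1) (by omega) (by omega) (by omega) hsat').tail hstep

theorem mem_of_isCompleteChain_dualArc (hA : IsArcDiagram n A) (hnc : NonCrossing A)
    {i j : ℕ} (hi : 1 ≤ i) (hij : i < j) (hjn : j ≤ n)
    (h : IsCompleteChain (dualArc n A) i (j - 1)) : (i, j) ∈ A := by
  obtain ⟨hchain, hnone_into, hnone_from⟩ := h
  have hsat := hchain.isArcSaturated_Ioc_of_dualArc hA hnc
  obtain ⟨a, ha⟩ : ∃ a, (a, j) ∈ A := by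
    by_contra! hj
    obtain ⟨M, hjM, hMn, hc⟩ := exists_isCompleteChain_of_forall_notMem_into hA hjn hj
    exact hnone_from M (hc.sub_one_mem_dualArc (by omega) hjM hMn)
  have hai : a ≤ i := not_lt.1 fun hia => by
    have := (hA _ ha).2.1
    have := ((hsat a j ha).1 ⟨hia, by omega⟩).2
    omega
  rcases hai.eq_or_lt with rfl | hai
  · exact ha
  exfalso
  by_cases hfrom : ∃ z, (i, z) ∈ A
  · obtain ⟨z, hz⟩ := hfrom
    have hiz := (hA _ hz).2.1
    have hzj : j ≤ z := not_lt.1 fun hzj => by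
      simpa [hiz] using (hsat i z hz).2 ⟨hiz, by omega⟩
    exact hnc (a, j) ha (i, z) hz (by simp; omega) ⟨hai.le, hij, hzj⟩
  · push Not at hfrom
    obtain ⟨m, hmi, hc⟩ := exists_isCompleteChain_of_forall_notMem_from hA hfrom
    rcases Nat.lt_or_ge 1 m with hm | hm
    · exact hnone_into (m - 1) (hc.sub_one_mem_dualArc hm hmi (by omega))
    · have := (hA _ ha).1
      have := ((hc.isArcSaturated_Icc hA hnc a j ha).1 ⟨by omega, by omega⟩).2
      omega

theorem mem_iff_isCompleteChain_dualArc (hA : IsArcDiagram n A) (hnc : NonCrossing A)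
    {i j : ℕ} :
    (i, j) ∈ A ↔ 1 ≤ i ∧ i < j ∧ j ≤ n ∧ IsCompleteChain (dualArc n A) i (j - 1) := by
  refine ⟨fun hij => ?_, fun ⟨hi, hij, hjn, hc⟩ =>
    mem_of_isCompleteChain_dualArc hA hnc hi hij hjn hc⟩
  obtain ⟨hi, hij', hjn⟩ := hA _ hij
  refine ⟨hi, hij', hjn, arcChain_dualArc_of_mem hA hnc hij, fun a ha => ?_, fun b hb => ?_⟩
  · exact (mem_dualArc.1 ha).2.2.2.2.2 j hij
  · have hc := (mem_dualArc.1 hb).2.2.2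
    rw [Nat.sub_add_cancel (by omega)] at hc
    exact hc.2.1 i hij

theorem mem_opArc (hA : IsArcDiagram n A) {a b : ℕ} :
    (a, b) ∈ opArc n A ↔ (n + 1 - b, n + 1 - a) ∈ A := by
  simp only [opArc, Set.mem_image, Prod.exists, Prod.mk.injEq]
  constructor
  · rintro ⟨p, q, hpq, rfl, rfl⟩
    have := hA _ hpq
    simpa [show n + 1 - (n + 1 - p) = p by omega, show n + 1 - (n + 1 - q) = q by omega]
  · intro h
    have := hA _ h
    exact ⟨_, _, h, by simp at this; omega, by simp at this; omega⟩

theorem arcChain_opArc (hA : IsArcDiagram n A) {x y : ℕ} (hx : x ≤ n + 1) (hy : y ≤ n + 1) :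
    ArcChain (opArc n A) (n + 1 - y) (n + 1 - x) ↔ ArcChain A x y := by
  constructor
  · intro h
    have := Relation.ReflTransGen.lift (p := Function.swap fun a b => (a, b) ∈ A)
      (fun k => n + 1 - k) (fun a b hab => (mem_opArc hA).1 hab) _ _ h
    rwa [Function.onFun, Relation.reflTransGen_swap, show n + 1 - (n + 1 - x) = x by omega,
      show n + 1 - (n + 1 - y) = y by omega] at this
  · intro h
    refine Relation.reflTransGen_swap.1 (Relation.ReflTransGen.lift (fun k => n + 1 - k)
      (fun a b hab => ?_) _ _ h)
    have := hA _ hab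
    simp only [Function.onFun, Function.swap]
    rwa [mem_opArc hA, show n + 1 - (n + 1 - a) = a by omega,
      show n + 1 - (n + 1 - b) = b by omega]

theorem isCompleteChain_opArc (hA : IsArcDiagram n A) {x y : ℕ} (hx : x ≤ n + 1)
    (hy : y ≤ n + 1) :
    IsCompleteChain (opArc n A) (n + 1 - y) (n + 1 - x) ↔ IsCompleteChain A x y := by
  have hinv : ∀ {k}, k ≤ n + 1 → n + 1 - (n + 1 - k) = k := fun _ => by omega
  simp only [IsCompleteChain, arcChain_opArc hA hx hy, mem_opArc hA, hinv hx, hinv hy]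
  constructor
  · rintro ⟨hc, hfrom, hinto⟩
    refine ⟨hc, fun a ha => hinto (n + 1 - a) ?_, fun b hb => hfrom (n + 1 - b) ?_⟩
    · rwa [hinv (by have := hA _ ha; omega)]
    · rwa [hinv (by have := hA _ hb; omega)]
  · rintro ⟨hc, hinto, hfrom⟩
    exact ⟨hc, fun a => hfrom _, fun b => hinto _⟩

theorem mem_opArc_dualArc_opArc (hA : IsArcDiagram n A) {i j : ℕ} :
    (i, j) ∈ opArc n (dualArc n (opArc n A)) ↔
      1 ≤ i ∧ i < j ∧ j ≤ n ∧ IsCompleteChain A i (j - 1) := by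
  rw [mem_opArc isArcDiagram_dualArc, mem_dualArc]
  by_cases hij : 1 ≤ i ∧ i < j ∧ j ≤ n
  · rw [show n + 1 - j + 1 = n + 1 - (j - 1) by omega,
      isCompleteChain_opArc hA (by omega) (by omega)]
    have hbounds : 1 ≤ n + 1 - j ∧ n + 1 - j < n + 1 - i ∧ n + 1 - i ≤ n := by omega
    simp only [hij, hbounds, true_and]
  · exact iff_of_false (fun h => hij (by omega)) (fun h => hij ⟨h.1, h.2.1, h.2.2.1⟩)

end ArcDiagram

/-- The map `A ↦ op(A*)` is an involution on non-crossing arc diagrams on `n` points. -/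
theorem stmt15 (n : ℕ) (A : Set (ℕ × ℕ))
    (hA : IsArcDiagram n A) (hnc : NonCrossing A) :
    opArc n (dualArc n (opArc n (dualArc n A))) = A := by
  ext ⟨i, j⟩
  rw [mem_opArc_dualArc_opArc isArcDiagram_dualArc, mem_iff_isCompleteChain_dualArc hA hnc]
end

section
/- For the equioriented A_n quiver, let M = P ⊕ X with P projective and X without projective direct summands, and let N = N_P ⊕ N̄ with N_P projective and N̄ without projective summands. Then N embeds into M if and only if N̄ embeds into X and dim N − dim N̄ ≤ dim P componentwise. -/
/-!
The composite map `X_i → X_n` to the top vertex is injective on a projective representation and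
vanishes on a representation without projective summands: a vector of `X_i` that survives to `X_n`,
with `i` minimal, spans a copy of `P_i`, which splits off through a rank-one idempotent. So in an
embedding `N_P ⊕ N̄ ↪ P ⊕ X` the component `N̄ → P` vanishes, giving `N̄ ↪ X`, while `N_P → P` stays
injective, giving the dimension bound. Conversely, a projective embeds into another one with a
larger dimension vector, by extending an embedding one vertex at a time.
-/

open Function Module LinearMap

section LinearAlgebra

variable {K A B C : Type*} [Field K] [AddCommGroup A] [Module K A] [AddCommGroup B] [Module K B]
  [AddCommGroup C] [Module K C]

theorem LinearMap.exists_injective_comp_eq [FiniteDimensional K B] [FiniteDimensional K C]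
    {f : A →ₗ[K] B} (hf : Injective f) {g : A →ₗ[K] C} (hg : Injective g)
    (hd : finrank K B ≤ finrank K C) : ∃ h : B →ₗ[K] C, Injective h ∧ h ∘ₗ f = g := by
  have : FiniteDimensional K A := Module.Finite.of_injective f hf
  obtain ⟨l, hl⟩ := f.exists_leftInverse_of_injective (ker_eq_bot.2 hf)
  have hlf : ∀ a, l (f a) = a := LinearMap.congr_fun hl
  obtain ⟨E, hE⟩ := (range g).exists_isCompl
  let π : B →ₗ[K] ker l :=
    (LinearMap.id - f ∘ₗ l).codRestrict (ker l) fun b => by simp [hlf]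
  have hdim : finrank K (ker l) ≤ finrank K E := by
    have hB := l.finrank_range_add_finrank_ker
    have hC := Submodule.finrank_add_eq_of_isCompl hE
    rw [range_eq_top.2 fun a => ⟨f a, hlf a⟩, finrank_top] at hB
    rw [LinearMap.finrank_range_of_inj hg] at hC
    omega
  obtain ⟨k, hk⟩ := finrank_le_iff_exists_linearMap.1 hdim
  -- `g` on `range f`, plus an injection of the complement `ker l` into the complement `E`
  refine ⟨g ∘ₗ l + E.subtype ∘ₗ k ∘ₗ π, (injective_iff_map_eq_zero _).2 fun b hb => ?_, ?_⟩
  · have hsum : g (l b) + (k (π b) : C) = 0 := hb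
    have hgl : g (l b) = 0 := Submodule.disjoint_def.1 hE.disjoint _ ⟨l b, rfl⟩
      (by rw [eq_neg_of_add_eq_zero_left hsum]; exact E.neg_mem (k (π b)).2)
    rw [hgl, zero_add] at hsum
    have hlb : l b = 0 := (injective_iff_map_eq_zero g).1 hg _ hgl
    have hπb : π b = 0 := (injective_iff_map_eq_zero k).1 hk _ (Subtype.ext hsum)
    simpa [π, hlb] using congrArg Subtype.val hπb
  · have hπf : ∀ a, π (f a) = 0 := fun a => Subtype.ext (by simp [π, hlf])
    ext a
    simp [hlf, hπf]

end LinearAlgebra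

namespace ARep

noncomputable def pathMap (X : ARep) (i j : ℕ) : X.V i →ₗ[ℂ] X.V j :=
  if h : i ≤ j then Nat.leRecOn h (fun {k} g => X.f k ∘ₗ g) LinearMap.id else 0

variable (X : ARep) {i j k : ℕ}

@[simp] lemma pathMap_self : X.pathMap i i = LinearMap.id := by
  simp [pathMap, Nat.leRecOn_self]

lemma pathMap_of_lt (h : j < i) : X.pathMap i j = 0 := by
  simp [pathMap, Nat.not_le.2 h]

lemma pathMap_succ (h : i ≤ j) : X.pathMap i (j + 1) = X.f j ∘ₗ X.pathMap i j := by
  simp [pathMap, h, Nat.le_succ_of_le h, Nat.leRecOn_succ h]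

lemma pathMap_comp (hij : i ≤ j) (hjk : j ≤ k) : X.pathMap j k ∘ₗ X.pathMap i j = X.pathMap i k := by
  induction k, hjk using Nat.le_induction with
  | base => simp
  | succ k hjk ih => rw [pathMap_succ X hjk, pathMap_succ X (hij.trans hjk), LinearMap.comp_assoc, ih]

lemma pathMap_comp_f (h : i < j) : X.pathMap (i + 1) j ∘ₗ X.f i = X.pathMap i j := by
  simpa [pathMap_succ X le_rfl] using X.pathMap_comp (Nat.le_succ i) h

end ARep

section Morphisms

variable {A B C D : ARep}

lemma homSet_comp {φ : ∀ i, A.V i →ₗ[ℂ] B.V i} {ψ : ∀ i, B.V i →ₗ[ℂ] C.V i}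
    (hφ : φ ∈ homSet A B) (hψ : ψ ∈ homSet B C) : (fun i => ψ i ∘ₗ φ i) ∈ homSet A C :=
  fun i => by
    rw [← LinearMap.comp_assoc, hψ i, LinearMap.comp_assoc, hφ i, LinearMap.comp_assoc]

lemma fst_mem_homSet : (fun i => LinearMap.fst ℂ (A.V i) (B.V i)) ∈ homSet (dsum A B) A :=
  fun _ => LinearMap.ext fun _ => rfl

lemma snd_mem_homSet : (fun i => LinearMap.snd ℂ (A.V i) (B.V i)) ∈ homSet (dsum A B) B :=
  fun _ => LinearMap.ext fun _ => rfl

lemma inl_mem_homSet : (fun i => LinearMap.inl ℂ (A.V i) (B.V i)) ∈ homSet A (dsum A B) :=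
  fun i => LinearMap.ext fun _ => Prod.ext rfl (map_zero (B.f i))

lemma inr_mem_homSet : (fun i => LinearMap.inr ℂ (A.V i) (B.V i)) ∈ homSet B (dsum A B) :=
  fun i => LinearMap.ext fun _ => Prod.ext (map_zero (A.f i)) rfl

lemma prodMap_mem_homSet {φ : ∀ i, A.V i →ₗ[ℂ] C.V i} {ψ : ∀ i, B.V i →ₗ[ℂ] D.V i}
    (hφ : φ ∈ homSet A C) (hψ : ψ ∈ homSet B D) :
    (fun i => (φ i).prodMap (ψ i)) ∈ homSet (dsum A B) (dsum C D) :=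
  fun i => LinearMap.ext fun y => Prod.ext (LinearMap.congr_fun (hφ i) y.1)
    (LinearMap.congr_fun (hψ i) y.2)

lemma pathMap_natural {φ : ∀ i, A.V i →ₗ[ℂ] B.V i} (hφ : φ ∈ homSet A B) (i j : ℕ) :
    φ j ∘ₗ A.pathMap i j = B.pathMap i j ∘ₗ φ i := by
  rcases le_or_gt i j with hij | hij
  · induction j, hij using Nat.le_induction with
    | base => simp
    | succ j hij ih =>
      rw [A.pathMap_succ hij, B.pathMap_succ hij, ← LinearMap.comp_assoc, ← hφ j,
        LinearMap.comp_assoc, ih, LinearMap.comp_assoc]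
  · simp [A.pathMap_of_lt hij, B.pathMap_of_lt hij]

lemma pathMap_dsum (A B : ARep) (i j : ℕ) :
    (dsum A B).pathMap i j = (A.pathMap i j).prodMap (B.pathMap i j) := by
  rcases le_or_gt i j with hij | hij
  · induction j, hij using Nat.le_induction with
    | base => simp only [ARep.pathMap_self]; rfl
    | succ j hij ih =>
      rw [ARep.pathMap_succ _ hij, ARep.pathMap_succ _ hij, ARep.pathMap_succ _ hij, ih]
      rfl
  · simp only [ARep.pathMap_of_lt _ hij]; rfl

end Morphisms

section Embeddings

variable {A B C D : ARep}

lemma RepIso.symm (h : RepIso A B) : RepIso B A := by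
  obtain ⟨φ, hφ, hbij⟩ := h
  let e i := LinearEquiv.ofBijective (φ i) (hbij i)
  refine ⟨fun i => (e i).symm.toLinearMap, fun i => LinearMap.ext fun y => ?_,
    fun i => (e i).symm.bijective⟩
  apply (e (i + 1)).injective
  have := LinearMap.congr_fun (hφ i) ((e i).symm y)
  simp only [LinearMap.comp_apply] at this
  simp [e, ← this]

lemma RepIso.repEmb (h : RepIso A B) : RepEmb A B :=
  let ⟨φ, hφ, hbij⟩ := h
  ⟨φ, hφ, fun i => (hbij i).1⟩

lemma RepEmb.trans (h₁ : RepEmb A B) (h₂ : RepEmb B C) : RepEmb A C :=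
  let ⟨_, hφ, hφi⟩ := h₁
  let ⟨_, hψ, hψi⟩ := h₂
  ⟨_, homSet_comp hφ hψ, fun i => (hψi i).comp (hφi i)⟩

lemma RepEmb.inl : RepEmb A (dsum A B) :=
  ⟨_, inl_mem_homSet, fun _ => LinearMap.inl_injective⟩

lemma RepEmb.inr : RepEmb B (dsum A B) :=
  ⟨_, inr_mem_homSet, fun _ => LinearMap.inr_injective⟩

lemma RepEmb.dsum (h₁ : RepEmb A C) (h₂ : RepEmb B D) : RepEmb (dsum A B) (dsum C D) :=
  let ⟨_, hφ, hφi⟩ := h₁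
  let ⟨_, hψ, hψi⟩ := h₂
  ⟨_, prodMap_mem_homSet hφ hψ, fun i => (hφi i).prodMap (hψi i)⟩

lemma RepEmb.finrank_le (h : RepEmb A B) (i : ℕ) [FiniteDimensional ℂ (B.V i)] :
    finrank ℂ (A.V i) ≤ finrank ℂ (B.V i) :=
  let ⟨_, _, hφi⟩ := h
  LinearMap.finrank_le_finrank_of_injective (hφi i)

lemma RepIso.finrank_eq (h : RepIso A B) (i : ℕ) : finrank ℂ (A.V i) = finrank ℂ (B.V i) :=
  let ⟨φ, _, hbij⟩ := h
  (LinearEquiv.ofBijective (φ i) (hbij i)).finrank_eq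

lemma finrank_dsum (i : ℕ) [FiniteDimensional ℂ (A.V i)] [FiniteDimensional ℂ (B.V i)] :
    finrank ℂ ((dsum A B).V i) = finrank ℂ (A.V i) + finrank ℂ (B.V i) :=
  Module.finrank_prod

end Embeddings

namespace IsProjRep

variable {n : ℕ} {P Q Y Z : ARep}

lemma f_injective (hP : IsProjRep n P) {i : ℕ} (hi : i < n) : Injective (P.f i) := by
  rcases Nat.eq_zero_or_pos i with rfl | hi₀
  · have := hP.1 0 (Or.inl rfl)
    exact Function.injective_of_subsingleton _
  · exact hP.2 i hi₀ hi

lemma injective_pathMap (hP : IsProjRep n P) {i j : ℕ} (hij : i ≤ j) (hj : j ≤ n) :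
    Injective (P.pathMap i j) := by
  induction j, hij using Nat.le_induction with
  | base => simpa using Function.injective_id
  | succ j hij ih =>
    rw [P.pathMap_succ hij, LinearMap.coe_comp]
    exact (hP.f_injective hj).comp (ih (Nat.le_of_succ_le hj))

lemma subsingleton_of_lt (hP : IsProjRep n P) {i : ℕ} (hi : n < i) : Subsingleton (P.V i) :=
  hP.1 i (Or.inr hi)

lemma hom_eq_zero (hP : IsProjRep n P) (hY : ∀ i, Y.pathMap i n = 0)
    {ψ : ∀ i, Y.V i →ₗ[ℂ] P.V i} (hψ : ψ ∈ homSet Y P) (i : ℕ) : ψ i = 0 := by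
  rcases le_or_gt i n with hin | hin
  · ext y
    apply hP.injective_pathMap hin le_rfl
    simpa [hY] using (LinearMap.congr_fun (pathMap_natural hψ i n) y).symm
  · have := hP.subsingleton_of_lt hin
    exact Subsingleton.elim _ _

lemma repEmb_fst_of_repEmb_dsum (hQ : IsProjRep n Q) (hZ : ∀ i, Z.pathMap i n = 0)
    (h : RepEmb Q (dsum P Z)) : RepEmb Q P := by
  obtain ⟨ψ, hψ, hψi⟩ := h
  refine ⟨_, homSet_comp hψ fst_mem_homSet, fun i => ?_⟩
  rcases le_or_gt i n with hin | hin
  · refine (injective_iff_map_eq_zero _).2 fun y hy => ?_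
    have hy' : (ψ i y).1 = 0 := hy
    have htop : ψ n (Q.pathMap i n y) = 0 := by
      rw [← LinearMap.comp_apply, pathMap_natural hψ, pathMap_dsum, hZ]
      exact Prod.ext (show P.pathMap i n (ψ i y).1 = 0 by rw [hy', map_zero]) rfl
    exact (injective_iff_map_eq_zero _).1 (hQ.injective_pathMap hin le_rfl) y
      ((injective_iff_map_eq_zero _).1 (hψi n) _ htop)
  · have := hQ.subsingleton_of_lt hin
    exact Function.injective_of_subsingleton _

lemma repEmb_snd_of_repEmb_dsum (hP : IsProjRep n P) (hY : ∀ i, Y.pathMap i n = 0)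
    (h : RepEmb Y (dsum P Z)) : RepEmb Y Z := by
  obtain ⟨ψ, hψ, hψi⟩ := h
  have hfst := hP.hom_eq_zero hY (homSet_comp hψ fst_mem_homSet)
  refine ⟨_, homSet_comp hψ snd_mem_homSet, fun i y y' hyy' => hψi i (Prod.ext ?_ hyy')⟩
  exact (LinearMap.congr_fun (hfst i) y).trans (LinearMap.congr_fun (hfst i) y').symm

end IsProjRep

lemma repEmb_of_forall_extend {Q P : ARep} (h₀ : ∃ φ : Q.V 0 →ₗ[ℂ] P.V 0, Injective φ)
    (hstep : ∀ i (φ : Q.V i →ₗ[ℂ] P.V i), Injective φ →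
      ∃ φ' : Q.V (i + 1) →ₗ[ℂ] P.V (i + 1), Injective φ' ∧ φ' ∘ₗ Q.f i = P.f i ∘ₗ φ) :
    RepEmb Q P := by
  choose! next hnext hcomm using hstep
  let seq : ∀ i, {φ : Q.V i →ₗ[ℂ] P.V i // Injective φ} := fun i =>
    Nat.rec ⟨h₀.choose, h₀.choose_spec⟩ (fun i φ => ⟨next i φ.1, hnext i φ.1 φ.2⟩) i
  exact ⟨fun i => (seq i).1, fun i => (hcomm i (seq i).1 (seq i).2).symm, fun i => (seq i).2⟩

lemma IsProjRep.repEmb_of_finrank_le {n : ℕ} {Q P : ARep} (hQ : IsProjRep n Q)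
    (hP : IsProjRep n P) (hQfd : ∀ i, FiniteDimensional ℂ (Q.V i))
    (hPfd : ∀ i, FiniteDimensional ℂ (P.V i))
    (hd : ∀ i, finrank ℂ (Q.V i) ≤ finrank ℂ (P.V i)) : RepEmb Q P := by
  have := hQ.1 0 (Or.inl rfl)
  refine repEmb_of_forall_extend ⟨0, Function.injective_of_subsingleton _⟩ fun i φ hφ => ?_
  rcases lt_or_ge i n with hin | hin
  · exact LinearMap.exists_injective_comp_eq (hQ.f_injective hin)
      ((hP.f_injective hin).comp hφ) (hd (i + 1))
  · have := hQ.subsingleton_of_lt (Nat.lt_succ_of_le hin)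
    have := hP.subsingleton_of_lt (Nat.lt_succ_of_le hin)
    exact ⟨0, Function.injective_of_subsingleton _, Subsingleton.elim _ _⟩

namespace ARep

noncomputable def sub (X : ARep) (S : ∀ i, Submodule ℂ (X.V i))
    (hS : ∀ i, ∀ y ∈ S i, X.f i y ∈ S (i + 1)) : ARep where
  V i := S i
  f i := (X.f i).restrict (hS i)

lemma repIso_dsum_sub_of_isCompl (X : ARep) {S T : ∀ i, Submodule ℂ (X.V i)}
    (hS : ∀ i, ∀ y ∈ S i, X.f i y ∈ S (i + 1)) (hT : ∀ i, ∀ y ∈ T i, X.f i y ∈ T (i + 1))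
    (hST : ∀ i, IsCompl (S i) (T i)) : RepIso (dsum (X.sub S hS) (X.sub T hT)) X :=
  ⟨fun i => (Submodule.prodEquivOfIsCompl _ _ (hST i)).toLinearMap,
    fun i => LinearMap.ext fun ⟨a, b⟩ => map_add (X.f i) a.1 b.1,
    fun i => (Submodule.prodEquivOfIsCompl _ _ (hST i)).bijective⟩

end ARep

/-- An idempotent endomorphism splits off its image; when it kills `ker (X.f i)` for `1 ≤ i < n`,
the structure maps are injective on the image, which is therefore a projective summand. -/
lemma NoProjSummand.eq_zero_of_isIdempotentElem {n : ℕ} {X : ARep} (hXs : SupportedOn n X)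
    (hX : NoProjSummand n X) {e : ∀ i, X.V i →ₗ[ℂ] X.V i} (he : e ∈ homSet X X)
    (hidem : ∀ i, IsIdempotentElem (e i))
    (hker : ∀ i, 1 ≤ i → i < n → ∀ y, X.f i y = 0 → e i y = 0) : e n = 0 := by
  have hS : ∀ i, ∀ y ∈ range (e i), X.f i y ∈ range (e (i + 1)) := by
    rintro i _ ⟨z, rfl⟩
    exact ⟨X.f i z, (LinearMap.congr_fun (he i) z).symm⟩
  have hT : ∀ i, ∀ y ∈ ker (e i), X.f i y ∈ ker (e (i + 1)) := fun i y hy => by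
    rw [mem_ker, ← LinearMap.comp_apply, ← he i, LinearMap.comp_apply, mem_ker.1 hy, map_zero]
  have hproj : IsProjRep n (X.sub _ hS) := by
    refine ⟨fun i hi => ?_, fun i hi₁ hin => ?_⟩
    · have := hXs i hi
      show Subsingleton (range (e i))
      infer_instance
    · refine (injective_iff_map_eq_zero _).2 fun ⟨y, hy⟩ h0 => Subtype.ext ?_
      show y = 0
      rw [← (hidem i).mem_range_iff.1 hy]
      exact hker i hi₁ hin y (congrArg Subtype.val h0)
  have : Subsingleton (range (e n)) :=
    hX _ _ hproj (X.repIso_dsum_sub_of_isCompl hS hT fun i => (hidem i).isCompl).symm n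
  ext y
  exact congrArg Subtype.val (Subsingleton.elim (⟨e n y, mem_range_self _ y⟩ : range (e n)) 0)

namespace ARep

variable (X : ARep) {n b : ℕ} (x : X.V (b + 1)) (l : Module.Dual ℂ (X.V n))

/-- The projection onto the copy of `P_{b+1}` generated by `x`, once `l` is `1` on the image of `x`
in `X_n`. -/
noncomputable def rankOneEnd (i : ℕ) : X.V i →ₗ[ℂ] X.V i :=
  (l ∘ₗ X.pathMap i n).smulRight (X.pathMap (b + 1) i x)

lemma rankOneEnd_apply (i : ℕ) (y : X.V i) :
    X.rankOneEnd x l i y = l (X.pathMap i n y) • X.pathMap (b + 1) i x := rfl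

lemma rankOneEnd_eq_zero {i : ℕ} (hi : ¬ (b + 1 ≤ i ∧ i ≤ n)) : X.rankOneEnd x l i = 0 := by
  ext y
  rcases not_and_or.1 hi with hi | hi <;>
    simp [rankOneEnd_apply, X.pathMap_of_lt (Nat.lt_of_not_le hi)]

lemma rankOneEnd_mem_homSet (hXs : SupportedOn n X) (hb : X.pathMap b n = 0) :
    X.rankOneEnd x l ∈ homSet X X := by
  intro i
  ext y
  rcases lt_or_ge i n with hin | hin
  · simp only [LinearMap.comp_apply, rankOneEnd_apply, map_smul]
    rw [show X.pathMap (i + 1) n (X.f i y) = X.pathMap i n y from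
      LinearMap.congr_fun (X.pathMap_comp_f hin) y]
    rcases lt_trichotomy i b with hib | rfl | hib
    · simp [X.pathMap_of_lt (Nat.lt_succ_of_lt hib), X.pathMap_of_lt (Nat.succ_lt_succ hib)]
    · simp [hb]
    · rw [X.pathMap_succ hib]
      rfl
  · have := hXs (i + 1) (Or.inr (Nat.lt_succ_of_le hin))
    exact Subsingleton.elim _ _

lemma isIdempotentElem_rankOneEnd (hl : l (X.pathMap (b + 1) n x) = 1) (i : ℕ) :
    IsIdempotentElem (X.rankOneEnd x l i) := by
  by_cases hi : b + 1 ≤ i ∧ i ≤ n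
  · ext y
    have hx : l (X.pathMap i n (X.pathMap (b + 1) i x)) = 1 := by
      rw [← hl, ← X.pathMap_comp hi.1 hi.2, LinearMap.comp_apply]
    simp [rankOneEnd_apply, hx]
  · rw [X.rankOneEnd_eq_zero x l hi]
    exact IsIdempotentElem.zero

lemma rankOneEnd_apply_of_f_eq_zero {i : ℕ} (hin : i < n) {y : X.V i} (hy : X.f i y = 0) :
    X.rankOneEnd x l i y = 0 := by
  rw [rankOneEnd_apply, ← X.pathMap_comp_f hin, LinearMap.comp_apply, hy]
  simp

lemma rankOneEnd_apply_pathMap (hl : l (X.pathMap (b + 1) n x) = 1) :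
    X.rankOneEnd x l n (X.pathMap (b + 1) n x) = X.pathMap (b + 1) n x := by
  simp [rankOneEnd_apply, hl]

end ARep

lemma NoProjSummand.pathMap_eq_zero {n : ℕ} {X : ARep} (hXs : SupportedOn n X)
    (hX : NoProjSummand n X) (i : ℕ) : X.pathMap i n = 0 := by
  induction i with
  | zero =>
    have := hXs 0 (Or.inl rfl)
    exact Subsingleton.elim _ _
  | succ b ih =>
    by_contra hne
    obtain ⟨x, hx⟩ : ∃ x, X.pathMap (b + 1) n x ≠ 0 := by
      by_contra! h
      exact hne (LinearMap.ext h)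
    obtain ⟨l, hl⟩ := Module.Projective.exists_dual_eq_one ℂ hx
    have he := hX.eq_zero_of_isIdempotentElem hXs (X.rankOneEnd_mem_homSet x l hXs ih)
      (X.isIdempotentElem_rankOneEnd x l hl)
      fun i _ hin y hy => X.rankOneEnd_apply_of_f_eq_zero x l hin hy
    apply hx
    rw [← X.rankOneEnd_apply_pathMap x l hl, he, LinearMap.zero_apply]

theorem stmt16_general (n : ℕ) (M P X N NP Nb : ARep)
    (hPfd : ∀ i, FiniteDimensional ℂ (P.V i))
    (hNPfd : ∀ i, FiniteDimensional ℂ (NP.V i)) (hNbfd : ∀ i, FiniteDimensional ℂ (Nb.V i))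
    (hP : IsProjRep n P) (hNP : IsProjRep n NP)
    (hX : SupportedOn n X ∧ NoProjSummand n X)
    (hNb : SupportedOn n Nb ∧ NoProjSummand n Nb)
    (hMdec : RepIso M (dsum P X)) (hNdec : RepIso N (dsum NP Nb)) :
    RepEmb N M ↔
      RepEmb Nb X ∧ ∀ i,
        (Module.finrank ℂ (N.V i) : ℤ) - (Module.finrank ℂ (Nb.V i) : ℤ) ≤
          (Module.finrank ℂ (P.V i) : ℤ) := by
  have hdimN i : finrank ℂ (N.V i) = finrank ℂ (NP.V i) + finrank ℂ (Nb.V i) := by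
    have := hNPfd i
    have := hNbfd i
    rw [hNdec.finrank_eq, finrank_dsum]
  have hX0 := hX.2.pathMap_eq_zero hX.1
  have hNb0 := hNb.2.pathMap_eq_zero hNb.1
  constructor
  · intro h
    have hsum := hNdec.symm.repEmb.trans (h.trans hMdec.repEmb)
    refine ⟨hP.repEmb_snd_of_repEmb_dsum hNb0 (RepEmb.inr.trans hsum), fun i => ?_⟩
    have := hPfd i
    have := (hNP.repEmb_fst_of_repEmb_dsum hX0 (RepEmb.inl.trans hsum)).finrank_le i
    rw [hdimN]
    push_cast
    omega
  · rintro ⟨hNbX, hdim⟩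
    have hNPP := hNP.repEmb_of_finrank_le hP hNPfd hPfd fun i => by
      have := hdim i
      rw [hdimN] at this
      omega
    exact hNdec.repEmb.trans ((hNPP.dsum hNbX).trans hMdec.symm.repEmb)

/-- Embedding criterion for representations of the equioriented `A_n` quiver:
writing `M = P ⊕ X` with `P` projective and `X` without projective summands, and
`N = N_P ⊕ N̄` likewise, `N` embeds into `M` iff `N̄` embeds into `X` and
`dim N − dim N̄ ≤ dim P` componentwise. -/
theorem stmt16 (n : ℕ) (M P X N NP Nb : ARep)
    (hMfd : ∀ i, FiniteDimensional ℂ (M.V i)) (hNfd : ∀ i, FiniteDimensional ℂ (N.V i))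
    (hPfd : ∀ i, FiniteDimensional ℂ (P.V i)) (hXfd : ∀ i, FiniteDimensional ℂ (X.V i))
    (hNPfd : ∀ i, FiniteDimensional ℂ (NP.V i)) (hNbfd : ∀ i, FiniteDimensional ℂ (Nb.V i))
    (hMs : SupportedOn n M) (hNs : SupportedOn n N)
    (hP : IsProjRep n P) (hNP : IsProjRep n NP)
    (hX : SupportedOn n X ∧ NoProjSummand n X)
    (hNb : SupportedOn n Nb ∧ NoProjSummand n Nb)
    (hMdec : RepIso M (dsum P X)) (hNdec : RepIso N (dsum NP Nb)) :
    RepEmb N M ↔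
      RepEmb Nb X ∧ ∀ i,
        (Module.finrank ℂ (N.V i) : ℤ) - (Module.finrank ℂ (Nb.V i) : ℤ) ≤
          (Module.finrank ℂ (P.V i) : ℤ) :=
  stmt16_general n M P X N NP Nb hPfd hNPfd hNbfd hP hNP hX hNb hMdec hNdec
end

section
/- A non-crossing arc diagram A on n points yields a representation N̄_A = ⊕_{(i,j)∈A} U_{i,j−1} of the equioriented A_n quiver satisfying dim End(N̄_A) = |A| = dim Ext^1(N̄_A, S); conversely, any multiplicity-free direct sum ⊕_{(i,j)∈I} U_{i,j−1} with no nonzero homomorphisms between distinct summands arises from a set I with no distinct (i,j),(k,l) satisfying i ≤ k < j ≤ l. -/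
/-!
Each `U_{a,b}` is thin: a morphism `ψ : U_{a,b} → U_{c,d}` is one scalar `homVal ψ k` at every
vertex, constant along the overlap of `[a,b]` and `[c,d]`. Commutativity at the vertex `c - 1`
(if `a < c`) or at `b` (if `b < d`) kills it, so
`dim Hom(U_{a,b}, U_{c,d}) = [c ≤ a ≤ d ≤ b]`; for `U_{i,j-1}` and `U_{k,l-1}` this is exactly
the crossing condition of the arcs `(k,l)` and `(i,j)`. Additivity of `Hom` then gives
`dim End(N̄_A) = |A|` and the converse.

For `Ext¹(N̄_A, S)`: as `N̄_A` lives on the vertices `1, …, n - 1`, the source and target of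
`delta` both have dimension `∑ᵢ dim (N̄_A)ᵢ`, so by rank–nullity
`dim Ext¹(N̄_A, S) = dim Hom(N̄_A, S)`, and each summand `U_{a,b}` maps onto exactly one
simple, namely `S_a`.
-/

open Module

section Urep

variable {a b k : ℕ}

lemma UV_of_mem (h : a ≤ k ∧ k ≤ b) : UV a b k = ⊤ := if_pos h

lemma UV_of_not_mem (h : ¬(a ≤ k ∧ k ≤ b)) : UV a b k = ⊥ := if_neg h

instance (a b k : ℕ) : FiniteDimensional ℂ ((Urep a b).V k) :=
  inferInstanceAs (FiniteDimensional ℂ (UV a b k))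

lemma Urep_subsingleton (h : ¬(a ≤ k ∧ k ≤ b)) : Subsingleton ((Urep a b).V k) := by
  show Subsingleton (UV a b k)
  rw [UV_of_not_mem h]
  infer_instance

lemma finrank_Urep_V (a b k : ℕ) :
    finrank ℂ ((Urep a b).V k) = if a ≤ k ∧ k ≤ b then 1 else 0 := by
  show finrank ℂ (UV a b k) = _
  split_ifs with h
  · rw [UV_of_mem h, finrank_top, finrank_self]
  · rw [UV_of_not_mem h, finrank_bot]

noncomputable def Urep.gen (k : ℕ) (h : a ≤ k ∧ k ≤ b) : (Urep a b).V k :=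
  ⟨1, by rw [UV_of_mem h]; trivial⟩

lemma Urep.eq_smul_gen (h : a ≤ k ∧ k ≤ b) (x : (Urep a b).V k) : x = x.1 • Urep.gen k h :=
  Subtype.ext (mul_one x.1).symm

open Classical in
lemma Urep.f_val (h : a ≤ k ∧ k + 1 ≤ b) (x : (Urep a b).V k) :
    ((Urep a b).f k x).1 = x.1 := by
  have hle : UV a b k ≤ UV a b (k + 1) := by
    rw [UV_of_mem ⟨h.1, by omega⟩, UV_of_mem ⟨by omega, h.2⟩]
  show ((if h : UV a b k ≤ UV a b (k + 1) then Submodule.inclusion h else 0) x).1 = x.1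
  rw [dif_pos hle]
  rfl

lemma Urep.f_gen (h : a ≤ k ∧ k + 1 ≤ b) :
    (Urep a b).f k (Urep.gen k ⟨h.1, by omega⟩) = Urep.gen (k + 1) ⟨by omega, h.2⟩ :=
  Subtype.ext (Urep.f_val h _)

open Classical in
lemma Urep.f_self (h : a ≤ b) : (Urep a b).f b = 0 := by
  show (if h : UV a b b ≤ UV a b (b + 1) then Submodule.inclusion h else 0) = 0
  rw [dif_neg]
  rw [UV_of_mem ⟨h, le_rfl⟩, UV_of_not_mem (by omega), top_le_iff]
  exact bot_ne_top

end Urep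

lemma homSet_apply_comm {M N : ARep} {φ : ∀ i, M.V i →ₗ[ℂ] N.V i} (hφ : φ ∈ homSet M N)
    (k : ℕ) (x : M.V k) : N.f k (φ k x) = φ (k + 1) (M.f k x) :=
  LinearMap.congr_fun (hφ k) x

section UrepHom

variable {a b c d : ℕ} {ψ : ∀ i, (Urep a b).V i →ₗ[ℂ] (Urep c d).V i}

-- the scalar by which `ψ k` acts on the line `(U_{a,b})_k`, and `0` where that space is zero
noncomputable def homVal (ψ : ∀ i, (Urep a b).V i →ₗ[ℂ] (Urep c d).V i) (k : ℕ) : ℂ :=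
  if h : a ≤ k ∧ k ≤ b then (ψ k (Urep.gen k h)).1 else 0

lemma homVal_of_mem {k : ℕ} (h : a ≤ k ∧ k ≤ b) : homVal ψ k = (ψ k (Urep.gen k h)).1 :=
  dif_pos h

lemma homVal_of_not_mem {k : ℕ} (h : ¬(c ≤ k ∧ k ≤ d)) : homVal ψ k = 0 := by
  have := Urep_subsingleton h
  unfold homVal
  split_ifs
  · rw [Subsingleton.elim (ψ k _) 0]
    rfl
  · rfl

lemma eq_zero_of_homVal (h : ∀ k, homVal ψ k = 0) : ψ = 0 := by
  funext k
  refine LinearMap.ext fun x => Subtype.ext ?_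
  show (ψ k x).1 = 0
  by_cases hk : a ≤ k ∧ k ≤ b
  · rw [Urep.eq_smul_gen hk x, map_smul]
    show x.1 * (ψ k (Urep.gen k hk)).1 = 0
    rw [← homVal_of_mem hk, h k, mul_zero]
  · have := Urep_subsingleton hk
    rw [Subsingleton.elim x 0, map_zero]
    rfl

variable (hψ : ψ ∈ homSet (Urep a b) (Urep c d))
include hψ

lemma homVal_succ {k : ℕ} (h : a ≤ k ∧ k + 1 ≤ b) (h' : c ≤ k ∧ k + 1 ≤ d) :
    homVal ψ (k + 1) = homVal ψ k := by
  rw [homVal_of_mem ⟨by omega, h.2⟩, homVal_of_mem ⟨h.1, by omega⟩, ← Urep.f_gen h,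
    ← homSet_apply_comm hψ, Urep.f_val h']

lemma homVal_eq_of_le {i j : ℕ} (hij : i ≤ j) (hi : a ≤ i ∧ c ≤ i)
    (hj : j ≤ b ∧ j ≤ d) : homVal ψ j = homVal ψ i := by
  induction j, hij using Nat.le_induction with
  | base => rfl
  | succ j hij ih =>
    rw [homVal_succ hψ ⟨by omega, hj.1⟩ ⟨by omega, hj.2⟩, ih ⟨by omega, by omega⟩]

-- the commutative square at `k` factors through `(U_{c,d})_k = 0`
lemma homVal_succ_eq_zero {k : ℕ} (h : a ≤ k ∧ k + 1 ≤ b) (hkc : k < c) :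
    homVal ψ (k + 1) = 0 := by
  have := Urep_subsingleton (a := c) (b := d) (k := k) (by omega)
  rw [homVal_of_mem ⟨by omega, h.2⟩, ← Urep.f_gen h, ← homSet_apply_comm hψ,
    Subsingleton.elim (ψ k _) 0, map_zero]
  rfl

lemma homVal_eq_zero_of_lt (hbd : b < d) : homVal ψ b = 0 := by
  by_cases hab : a ≤ b
  · by_cases hcb : c ≤ b
    · rw [homVal_of_mem ⟨hab, le_rfl⟩, ← Urep.f_val ⟨hcb, hbd⟩, homSet_apply_comm hψ,
        Urep.f_self hab, LinearMap.zero_apply, map_zero]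
      rfl
    · exact homVal_of_not_mem (by omega)
  · exact dif_neg (by omega)

lemma homVal_eq_zero (hC : ¬(c ≤ a ∧ a ≤ d ∧ d ≤ b)) (k : ℕ) : homVal ψ k = 0 := by
  by_cases hk : a ≤ k ∧ k ≤ b
  · by_cases hk' : c ≤ k ∧ k ≤ d
    · by_cases hac : a < c
      · rw [homVal_eq_of_le hψ hk'.1 ⟨by omega, le_rfl⟩ ⟨hk.2, hk'.2⟩]
        obtain ⟨c, rfl⟩ : ∃ c', c = c' + 1 := ⟨c - 1, by omega⟩
        exact homVal_succ_eq_zero hψ ⟨by omega, by omega⟩ (by omega)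
      · rw [← homVal_eq_of_le hψ hk.2 ⟨hk.1, hk'.1⟩ ⟨le_rfl, by omega⟩]
        exact homVal_eq_zero_of_lt hψ (by omega)
    · exact homVal_of_not_mem hk'
  · exact dif_neg hk

end UrepHom

open Classical in
noncomputable def Urep.incl (a b c d : ℕ) : ∀ k, (Urep a b).V k →ₗ[ℂ] (Urep c d).V k :=
  fun k => if h : UV a b k ≤ UV c d k then Submodule.inclusion h else 0

open Classical in
lemma Urep.incl_val {a b c d k : ℕ} (h : UV a b k ≤ UV c d k) (x : (Urep a b).V k) :
    (Urep.incl a b c d k x).1 = x.1 := by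
  show ((if h : UV a b k ≤ UV c d k then Submodule.inclusion h else 0) x).1 = x.1
  rw [dif_pos h]
  rfl

lemma Urep.incl_mem {a b c d : ℕ} (h : c ≤ a ∧ a ≤ d ∧ d ≤ b) :
    Urep.incl a b c d ∈ homSet (Urep a b) (Urep c d) := by
  intro k
  refine LinearMap.ext fun x => ?_
  by_cases hk : a ≤ k ∧ k ≤ b
  · by_cases hk' : c ≤ k + 1 ∧ k + 1 ≤ d
    · have hle : ∀ i, a ≤ i → i ≤ d → UV a b i ≤ UV c d i := fun i hai hid => by
        rw [UV_of_mem ⟨hai, by omega⟩, UV_of_mem ⟨by omega, hid⟩]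
      refine Subtype.ext ?_
      show ((Urep c d).f k _).1 = (Urep.incl a b c d (k + 1) _).1
      rw [Urep.f_val ⟨by omega, hk'.2⟩, Urep.incl_val (hle k hk.1 (by omega)),
        Urep.incl_val (hle (k + 1) (by omega) hk'.2), Urep.f_val ⟨hk.1, by omega⟩]
    · have := Urep_subsingleton hk'
      exact Subsingleton.elim _ _
  · have := Urep_subsingleton hk
    rw [Subsingleton.elim x 0, map_zero, map_zero]

lemma homDim_Urep (a b c d : ℕ) :
    homDim (Urep a b) (Urep c d) = if c ≤ a ∧ a ≤ d ∧ d ≤ b then 1 else 0 := by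
  split_ifs with hC
  · have ha : a ≤ a ∧ a ≤ b := ⟨le_rfl, by omega⟩
    let ev : homSet (Urep a b) (Urep c d) →ₗ[ℂ] ℂ :=
      { toFun := fun ψ => (ψ.1 a (Urep.gen a ha)).1
        map_add' := fun _ _ => rfl
        map_smul' := fun _ _ => rfl }
    have hinj : Function.Injective ev := by
      refine (injective_iff_map_eq_zero ev).2 fun ψ hψ => Subtype.ext (eq_zero_of_homVal ?_)
      intro k
      by_cases hk : a ≤ k ∧ k ≤ d
      · rw [homVal_eq_of_le ψ.2 hk.1 ⟨le_rfl, hC.1⟩ ⟨by omega, hk.2⟩, homVal_of_mem ha]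
        exact hψ
      · by_cases hka : a ≤ k
        · exact homVal_of_not_mem (by omega)
        · exact dif_neg (by omega)
    have hsurj : Function.Surjective ev := fun z => by
      refine ⟨z • ⟨Urep.incl a b c d, Urep.incl_mem hC⟩, ?_⟩
      show z * (Urep.incl a b c d a (Urep.gen a ha)).1 = z
      rw [Urep.incl_val (by rw [UV_of_mem ha, UV_of_mem ⟨hC.1, hC.2.1⟩]), Urep.gen, mul_one]
    rw [homDim, (LinearEquiv.ofBijective ev ⟨hinj, hsurj⟩).finrank_eq, finrank_self]
  · have : homSet (Urep a b) (Urep c d) = ⊥ := (Submodule.eq_bot_iff _).2 fun ψ hψ =>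
      eq_zero_of_homVal (homVal_eq_zero hψ hC)
    rw [homDim, this, finrank_bot]

noncomputable def homSetDsumLeft (M M' N : ARep) :
    homSet (dsum M M') N ≃ₗ[ℂ] homSet M N × homSet M' N where
  toFun φ :=
    (⟨fun i => φ.1 i ∘ₗ LinearMap.inl ℂ _ _, fun i => LinearMap.ext fun x =>
        (homSet_apply_comm φ.2 i (x, 0)).trans
          (congrArg (φ.1 (i + 1)) (Prod.ext rfl (map_zero (M'.f i))))⟩,
     ⟨fun i => φ.1 i ∘ₗ LinearMap.inr ℂ _ _, fun i => LinearMap.ext fun x =>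
        (homSet_apply_comm φ.2 i (0, x)).trans
          (congrArg (φ.1 (i + 1)) (Prod.ext (map_zero (M.f i)) rfl))⟩)
  invFun ψ := ⟨fun i => (ψ.1.1 i).coprod (ψ.2.1 i), fun i => LinearMap.ext fun x => by
      show N.f i (ψ.1.1 i x.1 + ψ.2.1 i x.2) =
        ψ.1.1 (i + 1) (M.f i x.1) + ψ.2.1 (i + 1) (M'.f i x.2)
      rw [map_add, homSet_apply_comm ψ.1.2, homSet_apply_comm ψ.2.2]⟩
  left_inv φ := Subtype.ext <| funext fun i => LinearMap.coprod_comp_inl_inr (φ.1 i)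
  right_inv ψ := Prod.ext (Subtype.ext <| funext fun i => LinearMap.coprod_inl _ _)
    (Subtype.ext <| funext fun i => LinearMap.coprod_inr _ _)
  map_add' _ _ := rfl
  map_smul' _ _ := rfl

noncomputable def homSetDsumRight (M N N' : ARep) :
    homSet M (dsum N N') ≃ₗ[ℂ] homSet M N × homSet M N' where
  toFun φ :=
    (⟨fun i => LinearMap.fst ℂ _ _ ∘ₗ φ.1 i, fun i => LinearMap.ext fun x =>
        congrArg Prod.fst (homSet_apply_comm φ.2 i x)⟩,
     ⟨fun i => LinearMap.snd ℂ _ _ ∘ₗ φ.1 i, fun i => LinearMap.ext fun x =>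
        congrArg Prod.snd (homSet_apply_comm φ.2 i x)⟩)
  invFun ψ := ⟨fun i => (ψ.1.1 i).prod (ψ.2.1 i), fun i => LinearMap.ext fun x =>
      Prod.ext (homSet_apply_comm ψ.1.2 i x) (homSet_apply_comm ψ.2.2 i x)⟩
  left_inv _ := rfl
  right_inv _ := rfl
  map_add' _ _ := rfl
  map_smul' _ _ := rfl

noncomputable def homSetDsumFam {m : ℕ} (M : ARep) (F : Fin m → ARep) :
    homSet M (dsumFam F) ≃ₗ[ℂ] ∀ j, homSet M (F j) where
  toFun φ j := ⟨fun i => LinearMap.proj (φ := fun j => (F j).V i) j ∘ₗ φ.1 i,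
    fun i => LinearMap.ext fun x => congrFun (homSet_apply_comm φ.2 i x) j⟩
  invFun ψ := ⟨fun i => LinearMap.pi fun j => (ψ j).1 i, fun i => LinearMap.ext fun x =>
      funext fun j => homSet_apply_comm (ψ j).2 i x⟩
  left_inv _ := rfl
  right_inv _ := rfl
  map_add' _ _ := rfl
  map_smul' _ _ := rfl

lemma homDim_dsum_left (M M' N : ARep) [FiniteDimensional ℂ (homSet M N)]
    [FiniteDimensional ℂ (homSet M' N)] :
    homDim (dsum M M') N = homDim M N + homDim M' N := by
  rw [homDim, (homSetDsumLeft M M' N).finrank_eq, finrank_prod, homDim, homDim]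

lemma homDim_dsum_right (M N N' : ARep) [FiniteDimensional ℂ (homSet M N)]
    [FiniteDimensional ℂ (homSet M N')] :
    homDim M (dsum N N') = homDim M N + homDim M N' := by
  rw [homDim, (homSetDsumRight M N N').finrank_eq, finrank_prod, homDim, homDim]

lemma homDim_dsumFam {m : ℕ} (M : ARep) (F : Fin m → ARep)
    [∀ j, FiniteDimensional ℂ (homSet M (F j))] :
    homDim M (dsumFam F) = ∑ j, homDim M (F j) := by
  rw [homDim, (homSetDsumFam M F).finrank_eq, finrank_pi_fintype]
  rfl

lemma homDim_eq_zero_of_subsingleton {M N : ARep}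
    (h : ∀ i, Subsingleton (M.V i →ₗ[ℂ] N.V i)) : homDim M N = 0 :=
  have : Subsingleton (homSet M N) :=
    ⟨fun _ _ => Subtype.ext (funext fun _ => Subsingleton.elim _ _)⟩
  finrank_zero_of_subsingleton

lemma Module.Finite.pi_of_subsingleton_of_lt {K : Type*} [Field K] {W : ℕ → Type*}
    [∀ i, AddCommGroup (W i)] [∀ i, Module K (W i)] [∀ i, Module.Finite K (W i)] (m : ℕ)
    (h : ∀ i, m < i → Subsingleton (W i)) : Module.Finite K (∀ i, W i) := by
  refine Module.Finite.of_injective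
    (LinearMap.pi fun i : Fin (m + 1) => LinearMap.proj (R := K) (φ := W) i) ?_
  intro φ ψ hφψ
  funext i
  by_cases hi : i ≤ m
  · exact congrFun hφψ ⟨i, by omega⟩
  · exact (h i (by omega)).elim _ _

lemma SupportedOn.finite_linearMaps {m : ℕ} {M : ARep} (hM : SupportedOn m M)
    [∀ i, FiniteDimensional ℂ (M.V i)] (W : ℕ → Type) [∀ i, AddCommGroup (W i)]
    [∀ i, Module ℂ (W i)] [∀ i, FiniteDimensional ℂ (W i)] :
    Module.Finite ℂ (∀ i, M.V i →ₗ[ℂ] W i) :=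
  Module.Finite.pi_of_subsingleton_of_lt m fun i hi => have := hM i (Or.inr hi); inferInstance

lemma SupportedOn.finiteDimensional_homSet {m : ℕ} {M : ARep} (hM : SupportedOn m M)
    (N : ARep) [∀ i, FiniteDimensional ℂ (M.V i)] [∀ i, FiniteDimensional ℂ (N.V i)] :
    FiniteDimensional ℂ (homSet M N) :=
  have := hM.finite_linearMaps N.V
  inferInstance

lemma supportedOn_Urep {m a b : ℕ} (ha : 1 ≤ a) (hb : b ≤ m) : SupportedOn m (Urep a b) :=
  fun _ hi => Urep_subsingleton (by omega)

lemma supportedOn_dsumList {m : ℕ} {L : List (ℕ × ℕ)}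
    (hL : ∀ p ∈ L, 1 ≤ p.1 ∧ p.2 ≤ m) : SupportedOn m (dsumList L) := by
  induction L with
  | nil => exact supportedOn_Urep le_rfl (Nat.zero_le m)
  | cons p L ih =>
    intro i hi
    have := supportedOn_Urep (hL p (by simp)).1 (hL p (by simp)).2 i hi
    have := ih (fun q hq => hL q (List.mem_cons_of_mem p hq)) i hi
    exact inferInstanceAs (Subsingleton ((Urep p.1 p.2).V i × (dsumList L).V i))

instance finiteDimensional_dsumList_V (L : List (ℕ × ℕ)) (i : ℕ) :
    FiniteDimensional ℂ ((dsumList L).V i) := by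
  induction L with
  | nil => exact inferInstanceAs (FiniteDimensional ℂ ((Urep 1 0).V i))
  | cons p L ih =>
    exact inferInstanceAs (FiniteDimensional ℂ ((Urep p.1 p.2).V i × (dsumList L).V i))

instance finiteDimensional_socSum_V (n i : ℕ) : FiniteDimensional ℂ ((socSum n).V i) :=
  inferInstanceAs (FiniteDimensional ℂ (∀ j : Fin n, (Urep (j + 1) (j + 1)).V i))

lemma homDim_dsumList_left {m : ℕ} (L : List (ℕ × ℕ))
    (hL : ∀ p ∈ L, 1 ≤ p.1 ∧ p.2 ≤ m) (N : ARep) [∀ i, FiniteDimensional ℂ (N.V i)] :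
    homDim (dsumList L) N = (L.map fun p => homDim (Urep p.1 p.2) N).sum := by
  induction L with
  | nil =>
    show homDim (Urep 1 0) N = 0
    exact homDim_eq_zero_of_subsingleton fun i =>
      have := Urep_subsingleton (a := 1) (b := 0) (k := i) (by omega)
      inferInstance
  | cons p L ih =>
    have hL' : ∀ q ∈ L, 1 ≤ q.1 ∧ q.2 ≤ m := fun q hq => hL q (List.mem_cons_of_mem p hq)
    have := (supportedOn_Urep (hL p (by simp)).1 (hL p (by simp)).2).finiteDimensional_homSet N
    have := (supportedOn_dsumList hL').finiteDimensional_homSet N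
    rw [List.map_cons, List.sum_cons, ← ih hL']
    exact homDim_dsum_left _ _ N

lemma homDim_dsumList_right {m : ℕ} {M : ARep} (hM : SupportedOn m M)
    [∀ i, FiniteDimensional ℂ (M.V i)] (L : List (ℕ × ℕ)) :
    homDim M (dsumList L) = (L.map fun q => homDim M (Urep q.1 q.2)).sum := by
  induction L with
  | nil =>
    show homDim M (Urep 1 0) = 0
    exact homDim_eq_zero_of_subsingleton fun i =>
      have := Urep_subsingleton (a := 1) (b := 0) (k := i) (by omega)
      inferInstance
  | cons q L ih =>
    have := hM.finiteDimensional_homSet (Urep q.1 q.2)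
    have := hM.finiteDimensional_homSet (dsumList L)
    rw [List.map_cons, List.sum_cons, ← ih]
    exact homDim_dsum_right M _ _

lemma ker_delta (M N : ARep) : LinearMap.ker (delta M N) = homSet M N := by
  ext φ
  simp only [LinearMap.mem_ker, funext_iff, Pi.zero_apply]
  exact forall_congr' fun i => sub_eq_zero

lemma ext1Dim_eq_homDim_of_finrank_eq (M N : ARep)
    [Module.Finite ℂ (∀ i, M.V i →ₗ[ℂ] N.V i)]
    [Module.Finite ℂ (∀ i, M.V i →ₗ[ℂ] N.V (i + 1))]
    (h : finrank ℂ (∀ i, M.V i →ₗ[ℂ] N.V i) =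
      finrank ℂ (∀ i, M.V i →ₗ[ℂ] N.V (i + 1))) :
    ext1Dim M N = homDim M N := by
  have hker := (delta M N).finrank_range_add_finrank_ker
  have hquot := (LinearMap.range (delta M N)).finrank_quotient_add_finrank
  rw [ker_delta] at hker
  unfold ext1Dim homDim
  omega

lemma sum_fin_ite_succ_eq (n a : ℕ) :
    (∑ j : Fin n, if (j : ℕ) + 1 = a then 1 else 0) = if 1 ≤ a ∧ a ≤ n then 1 else 0 := by
  rw [Fin.sum_univ_eq_sum_range (fun j => if j + 1 = a then 1 else 0)]
  induction n with
  | zero => rw [Finset.sum_range_zero, if_neg (by omega)]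
  | succ n ih =>
    rw [Finset.sum_range_succ, ih]
    split_ifs <;> omega

section Socle

variable {n : ℕ}

lemma finrank_socSum_V (i : ℕ) :
    finrank ℂ ((socSum n).V i) = if 1 ≤ i ∧ i ≤ n then 1 else 0 := by
  show finrank ℂ (∀ j : Fin n, (Urep (j + 1) (j + 1)).V i) = _
  rw [finrank_pi_fintype, ← sum_fin_ite_succ_eq]
  exact Finset.sum_congr rfl fun j _ => by rw [finrank_Urep_V]; exact if_congr (by omega) rfl rfl

lemma homDim_Urep_socSum {a b : ℕ} (ha : 1 ≤ a) (hab : a ≤ b) (han : a ≤ n) :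
    homDim (Urep a b) (socSum n) = 1 := by
  have := fun j : Fin n => (supportedOn_Urep (m := b) ha le_rfl).finiteDimensional_homSet
    (Urep (j + 1) (j + 1))
  rw [socSum, homDim_dsumFam]
  calc ∑ j : Fin n, homDim (Urep a b) (Urep (j + 1) (j + 1))
      = ∑ j : Fin n, if (j : ℕ) + 1 = a then 1 else 0 :=
        Finset.sum_congr rfl fun j _ => by rw [homDim_Urep]; exact if_congr (by omega) rfl rfl
    _ = 1 := by rw [sum_fin_ite_succ_eq, if_pos ⟨ha, han⟩]

lemma ext1Dim_socSum {M : ARep} (hM : SupportedOn (n - 1) M)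
    [∀ i, FiniteDimensional ℂ (M.V i)] : ext1Dim M (socSum n) = homDim M (socSum n) := by
  have := hM.finite_linearMaps (socSum n).V
  have := hM.finite_linearMaps fun i => (socSum n).V (i + 1)
  have hdim : ∀ i, finrank ℂ (M.V i →ₗ[ℂ] (socSum n).V i) =
      finrank ℂ (M.V i →ₗ[ℂ] (socSum n).V (i + 1)) := fun i => by
    rw [finrank_linearMap, finrank_linearMap, finrank_socSum_V, finrank_socSum_V]
    by_cases hi : i = 0 ∨ n - 1 < i
    · have := hM i hi
      rw [finrank_zero_of_subsingleton, zero_mul, zero_mul]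
    · rw [if_pos (by omega), if_pos (by omega)]
  exact ext1Dim_eq_homDim_of_finrank_eq M (socSum n)
    (LinearEquiv.piCongrRight fun i => LinearEquiv.ofFinrankEq _ _ (hdim i)).finrank_eq

end Socle

section Arcs

-- `N̄_A = ⊕_{(i,j) ∈ A} U_{i,j-1}`
noncomputable abbrev arcRep (L : List (ℕ × ℕ)) : ARep :=
  dsumList (L.map fun p => (p.1, p.2 - 1))

variable {n : ℕ} {L : List (ℕ × ℕ)}

lemma homDim_Urep_arc {p q : ℕ × ℕ} (hp : p.1 < p.2) (hq : q.1 < q.2) :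
    homDim (Urep p.1 (p.2 - 1)) (Urep q.1 (q.2 - 1)) =
      if q.1 ≤ p.1 ∧ p.1 < q.2 ∧ q.2 ≤ p.2 then 1 else 0 := by
  rw [homDim_Urep]
  exact if_congr (by omega) rfl rfl

lemma arc_intervals_bound (hL : ∀ p ∈ L, 1 ≤ p.1 ∧ p.1 < p.2 ∧ p.2 ≤ n) :
    ∀ q ∈ L.map (fun p => (p.1, p.2 - 1)), 1 ≤ q.1 ∧ q.2 ≤ n - 1 := fun q hq => by
  obtain ⟨p, hp, rfl⟩ := List.mem_map.1 hq
  have := hL p hp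
  exact ⟨this.1, by omega⟩

lemma supportedOn_arcRep (hL : ∀ p ∈ L, 1 ≤ p.1 ∧ p.1 < p.2 ∧ p.2 ≤ n) :
    SupportedOn (n - 1) (arcRep L) :=
  supportedOn_dsumList (arc_intervals_bound hL)

lemma homDim_arcRep_left (hL : ∀ p ∈ L, 1 ≤ p.1 ∧ p.1 < p.2 ∧ p.2 ≤ n)
    (N : ARep) [∀ i, FiniteDimensional ℂ (N.V i)] :
    homDim (arcRep L) N = (L.map fun p => homDim (Urep p.1 (p.2 - 1)) N).sum := by
  rw [arcRep, homDim_dsumList_left _ (arc_intervals_bound hL) N, List.map_map]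
  rfl

lemma homDim_arcRep_self (hnd : L.Nodup) (hL : ∀ p ∈ L, 1 ≤ p.1 ∧ p.1 < p.2 ∧ p.2 ≤ n)
    (hNC : ∀ p ∈ L, ∀ q ∈ L, p ≠ q → ¬(p.1 ≤ q.1 ∧ q.1 < p.2 ∧ p.2 ≤ q.2)) :
    homDim (arcRep L) (arcRep L) = L.length := by
  have hrow : ∀ p ∈ L, homDim (Urep p.1 (p.2 - 1)) (arcRep L) = 1 := fun p hp => by
    rw [arcRep, homDim_dsumList_right (supportedOn_Urep (hL p hp).1 le_rfl), List.map_map,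
      ← List.sum_toFinset _ hnd, Finset.sum_eq_single_of_mem p (List.mem_toFinset.2 hp)]
    · show homDim (Urep p.1 (p.2 - 1)) (Urep p.1 (p.2 - 1)) = 1
      rw [homDim_Urep_arc (hL p hp).2.1 (hL p hp).2.1, if_pos ⟨le_rfl, (hL p hp).2.1, le_rfl⟩]
    · intro q hq hqp
      show homDim (Urep p.1 (p.2 - 1)) (Urep q.1 (q.2 - 1)) = 0
      have hq := List.mem_toFinset.1 hq
      rw [homDim_Urep_arc (hL p hp).2.1 (hL q hq).2.1, if_neg (hNC q hq p hp hqp)]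
  rw [homDim_arcRep_left hL, List.map_congr_left hrow]
  simp

lemma ext1Dim_arcRep_socSum (hL : ∀ p ∈ L, 1 ≤ p.1 ∧ p.1 < p.2 ∧ p.2 ≤ n) :
    ext1Dim (arcRep L) (socSum n) = L.length := by
  rw [ext1Dim_socSum (supportedOn_arcRep hL), homDim_arcRep_left hL,
    List.map_congr_left fun p hp =>
      have := hL p hp
      homDim_Urep_socSum this.1 (by omega) (by omega)]
  simp

end Arcs

/-- A non-crossing arc diagram `A` (encoded as a duplicate-free list `L` of arcs) yields
`N̄_A = ⊕_{(i,j)∈A} U_{i,j−1}` with `dim End(N̄_A) = |A| = dim Ext¹(N̄_A, S)`; conversely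
any multiplicity-free sum with no nonzero homs between distinct summands comes from a
non-crossing set of pairs. -/
theorem stmt19 (n : ℕ) (L : List (ℕ × ℕ)) (hnd : L.Nodup)
    (hL : ∀ p ∈ L, 1 ≤ p.1 ∧ p.1 < p.2 ∧ p.2 ≤ n) :
    ((∀ p ∈ L, ∀ q ∈ L, p ≠ q → ¬(p.1 ≤ q.1 ∧ q.1 < p.2 ∧ p.2 ≤ q.2)) →
      homDim (dsumList (L.map fun p => (p.1, p.2 - 1)))
          (dsumList (L.map fun p => (p.1, p.2 - 1))) = L.length ∧
      ext1Dim (dsumList (L.map fun p => (p.1, p.2 - 1))) (socSum n) = L.length) ∧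
    ((∀ p ∈ L, ∀ q ∈ L, p ≠ q →
        homDim (Urep p.1 (p.2 - 1)) (Urep q.1 (q.2 - 1)) = 0) →
      ∀ p ∈ L, ∀ q ∈ L, p ≠ q → ¬(p.1 ≤ q.1 ∧ q.1 < p.2 ∧ p.2 ≤ q.2)) := by
  refine ⟨fun hNC => ⟨homDim_arcRep_self hnd hL hNC, ext1Dim_arcRep_socSum hL⟩, ?_⟩
  intro hHom p hp q hq hpq hcross
  have hqp := hHom q hq p hp hpq.symm
  rw [homDim_Urep_arc (hL q hq).2.1 (hL p hp).2.1, if_pos hcross] at hqp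
  exact one_ne_zero hqp
end
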